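/- arXiv:1009.2412 — 6 statements merged into one kernel-verified Lean document; each statement's English description precedes it below -/
import Mathlib

section
/- For 0 < α < 1 and t > 0, the integral I₁(t) = ∫₀^∞ (e^{itx} − 1 − itx/(1+x²)) x^{−(α+1)} dx equals i c t − t^α e^{−iπα/2} Γ(1−α)/α for some real constant c depending only on α. -/
open MeasureTheory Set Complex Real Filter Topology

/-! For `Re l ≤ 0` put `F(l) = ∫₀^∞ (e^{lx} - 1) x^{-(α+1)} dx`. Since `‖e^w - 1‖ ≤ min 2 (2‖w‖)`
on the closed left half-plane, dominated convergence makes `F` continuous there and holomorphic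
inside, with `F'(l) = ∫₀^∞ e^{lx} x^{-α} dx`. On the negative axis this is the Gamma integral
`Γ(1-α) r^{α-1}`, so `F(-r) + Γ(1-α) r^α / α` is constant, and it vanishes at `r = 0`. The identity
theorem and continuity up to the imaginary axis give `F(l) = -Γ(1-α)/α · (-l)^α` on the closed
half-plane; at `l = it` this is the `t^α e^{-iπα/2}` term, while the compensator `itx/(1+x²)`
contributes the linear term, with `c = -∫₀^∞ x^{-α}/(1+x²) dx`. -/

lemma norm_cexp_sub_one_le_min {w : ℂ} (hw : w.re ≤ 0) :
    ‖cexp w - 1‖ ≤ min 2 (2 * ‖w‖) := by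
  have h2 : ‖cexp w - 1‖ ≤ 2 := calc
    ‖cexp w - 1‖ ≤ ‖cexp w‖ + ‖(1 : ℂ)‖ := norm_sub_le _ _
    _ ≤ 1 + 1 := by rw [norm_one, norm_exp]; gcongr; exact Real.exp_le_one_iff.mpr hw
    _ = 2 := by norm_num
  rcases le_or_gt ‖w‖ 1 with h | h
  · exact le_min h2 (norm_exp_sub_one_le h)
  · exact le_min h2 (by linarith)

lemma rpow_neg_add_one_mul_self {x : ℝ} (hx : 0 < x) (α : ℝ) :
    x ^ (-(α + 1)) * x = x ^ (-α) := by
  rw [← Real.rpow_add_one hx.ne']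
  ring_nf

lemma integrableOn_min_mul_rpow {α C : ℝ} (hα₀ : 0 < α) (hα₁ : α < 1) (hC : 0 ≤ C) :
    IntegrableOn (fun x : ℝ => min 2 (C * x) * x ^ (-(α + 1))) (Ioi 0) := by
  have hmeas : AEStronglyMeasurable (fun x : ℝ => min 2 (C * x) * x ^ (-(α + 1))) :=
    (by fun_prop : Measurable _).aestronglyMeasurable
  rw [← Ioc_union_Ioi_eq_Ioi zero_le_one]
  refine IntegrableOn.union ?_ ?_
  · refine Integrable.mono' ((intervalIntegral.intervalIntegrable_rpow'
      (by linarith : (-1 : ℝ) < -α)).1.const_mul C) hmeas.restrict ?_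
    refine ae_restrict_of_forall_mem measurableSet_Ioc fun x hx => ?_
    have hx0 : 0 < x := hx.1
    calc ‖min 2 (C * x) * x ^ (-(α + 1))‖ = min 2 (C * x) * x ^ (-(α + 1)) :=
          Real.norm_of_nonneg (by positivity)
      _ ≤ C * x * x ^ (-(α + 1)) := by gcongr; exact min_le_right _ _
      _ = C * x ^ (-α) := by rw [mul_assoc, mul_comm x, rpow_neg_add_one_mul_self hx0]
  · refine Integrable.mono' ((integrableOn_Ioi_rpow_of_lt (by linarith : -(α + 1) < -1)
      zero_lt_one).const_mul 2) hmeas.restrict ?_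
    refine ae_restrict_of_forall_mem measurableSet_Ioi fun x (hx : 1 < x) => ?_
    have hx0 : 0 < x := by linarith
    rw [Real.norm_of_nonneg (by positivity)]
    gcongr
    exact min_le_left _ _

noncomputable def levyIntegral (α : ℝ) (l : ℂ) : ℂ :=
  ∫ x in Ioi (0 : ℝ), (cexp (l * x) - 1) * ((x ^ (-(α + 1)) : ℝ) : ℂ)

lemma aestronglyMeasurable_levyIntegrand (α : ℝ) (l : ℂ) {μ : Measure ℝ} :
    AEStronglyMeasurable (fun x : ℝ => (cexp (l * x) - 1) * ((x ^ (-(α + 1)) : ℝ) : ℂ)) μ :=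
  (by fun_prop : Measurable _).aestronglyMeasurable

lemma norm_levyIntegrand_le {α R x : ℝ} {l : ℂ} (hl : l.re ≤ 0) (hlR : ‖l‖ ≤ R) (hx : 0 < x) :
    ‖(cexp (l * x) - 1) * ((x ^ (-(α + 1)) : ℝ) : ℂ)‖ ≤ min 2 (2 * R * x) * x ^ (-(α + 1)) := by
  have hre : (l * x).re ≤ 0 := by
    rw [re_mul_ofReal]; exact mul_nonpos_of_nonpos_of_nonneg hl hx.le
  rw [norm_mul, norm_real, Real.norm_of_nonneg (by positivity)]
  gcongr
  calc ‖cexp (l * x) - 1‖ ≤ min 2 (2 * ‖l * x‖) := norm_cexp_sub_one_le_min hre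
    _ ≤ min 2 (2 * R * x) := by
      rw [norm_mul, norm_real, Real.norm_of_nonneg hx.le, ← mul_assoc]
      gcongr

lemma integrableOn_levyIntegrand {α : ℝ} (hα₀ : 0 < α) (hα₁ : α < 1) {l : ℂ} (hl : l.re ≤ 0) :
    IntegrableOn (fun x : ℝ => (cexp (l * x) - 1) * ((x ^ (-(α + 1)) : ℝ) : ℂ)) (Ioi 0) :=
  Integrable.mono' (integrableOn_min_mul_rpow hα₀ hα₁ (by positivity : 0 ≤ 2 * ‖l‖))
    (aestronglyMeasurable_levyIntegrand α l)
    (ae_restrict_of_forall_mem measurableSet_Ioi fun _ hx => norm_levyIntegrand_le hl le_rfl hx)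

lemma continuousOn_levyIntegral {α : ℝ} (hα₀ : 0 < α) (hα₁ : α < 1) :
    ContinuousOn (levyIntegral α) {l | l.re ≤ 0} := by
  intro l₀ _
  have hnear : ∀ᶠ l in 𝓝[{l : ℂ | l.re ≤ 0}] l₀, l.re ≤ 0 ∧ ‖l‖ ≤ ‖l₀‖ + 1 :=
    eventually_mem_nhdsWithin.and (eventually_nhdsWithin_of_eventually_nhds
      ((continuous_norm.tendsto l₀).eventually_le_const (lt_add_one _)))
  refine continuousWithinAt_of_dominated
    (Eventually.of_forall fun l => aestronglyMeasurable_levyIntegrand α l)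
    (hnear.mono fun l hl => ae_restrict_of_forall_mem measurableSet_Ioi fun _ hx =>
      norm_levyIntegrand_le hl.1 hl.2 hx)
    (integrableOn_min_mul_rpow hα₀ hα₁ (by positivity)) (ae_of_all _ fun x => ?_)
  exact (by fun_prop : Continuous fun l : ℂ => (cexp (l * x) - 1) * ((x ^ (-(α + 1)) : ℝ) : ℂ))
    |>.continuousWithinAt

lemma hasDerivAt_levyIntegral {α : ℝ} (hα₀ : 0 < α) (hα₁ : α < 1) {l : ℂ} (hl : l.re < 0) :
    HasDerivAt (levyIntegral α) (∫ x in Ioi (0 : ℝ), cexp (l * x) * ((x ^ (-α) : ℝ) : ℂ)) l := by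
  set ε := -l.re / 2
  have hε : 0 < ε := by simp only [ε]; linarith
  have hball : ∀ l' ∈ Metric.ball l ε, l'.re ≤ -ε := fun l' hl' => by
    have := (abs_le.1 ((abs_re_le_norm (l' - l)).trans (mem_ball_iff_norm.1 hl').le)).2
    rw [sub_re] at this
    simp only [ε] at this ⊢
    linarith
  have hbound : IntegrableOn (fun x : ℝ => Real.exp (-ε * x) * x ^ (-α)) (Ioi 0) := by
    simpa [mul_comm] using
      integrableOn_rpow_mul_exp_neg_mul_rpow (by linarith : -1 < -α) zero_lt_one hε
  refine (hasDerivAt_integral_of_dominated_loc_of_deriv_le (Metric.ball_mem_nhds l hε)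
    (Eventually.of_forall fun l => aestronglyMeasurable_levyIntegrand α l)
    (integrableOn_levyIntegrand hα₀ hα₁ hl.le)
    (F' := fun l (x : ℝ) => cexp (l * x) * ((x ^ (-α) : ℝ) : ℂ))
    (by fun_prop : Measurable _).aestronglyMeasurable ?_ hbound ?_).2
  · refine ae_restrict_of_forall_mem measurableSet_Ioi fun x (hx : 0 < x) l' hl' => ?_
    rw [norm_mul, norm_exp, norm_real, Real.norm_of_nonneg (by positivity), re_mul_ofReal]
    gcongr
    exact hball l' hl'
  · refine ae_restrict_of_forall_mem measurableSet_Ioi fun x (hx : 0 < x) l' _ => ?_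
    refine ((((hasDerivAt_mul_const (x : ℂ)).cexp).sub_const 1).mul_const
      ((x ^ (-(α + 1)) : ℝ) : ℂ)).congr_deriv ?_
    rw [← rpow_neg_add_one_mul_self hx α, ofReal_mul]
    ring

lemma integral_cexp_neg_mul_rpow_neg {α r : ℝ} (hα₁ : α < 1) (hr : 0 < r) :
    ∫ x in Ioi (0 : ℝ), cexp (-(r : ℂ) * x) * ((x ^ (-α) : ℝ) : ℂ)
      = ((Real.Gamma (1 - α) * r ^ (α - 1) : ℝ) : ℂ) := by
  calc ∫ x in Ioi (0 : ℝ), cexp (-(r : ℂ) * x) * ((x ^ (-α) : ℝ) : ℂ)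
      = ∫ x in Ioi (0 : ℝ), ((x ^ (1 - α - 1) * Real.exp (-(r * x)) : ℝ) : ℂ) := by
        refine setIntegral_congr_fun measurableSet_Ioi fun x _ => ?_
        push_cast
        ring_nf
    _ = _ := by
        rw [integral_complex_ofReal, integral_rpow_mul_exp_neg_mul_Ioi (by linarith) hr, one_div,
          Real.inv_rpow hr.le, ← Real.rpow_neg hr.le, mul_comm]
        ring_nf

lemma levyIntegral_neg_ofReal {α : ℝ} (hα₀ : 0 < α) (hα₁ : α < 1) {r : ℝ} (hr : 0 ≤ r) :
    levyIntegral α (-r) = -((Real.Gamma (1 - α) / α : ℝ) : ℂ) * ((r ^ α : ℝ) : ℂ) := by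
  set ψ : ℝ → ℂ := fun r =>
    levyIntegral α (-r) + ((Real.Gamma (1 - α) / α : ℝ) : ℂ) * ((r ^ α : ℝ) : ℂ)
  have hψ' : ∀ s ∈ Ioi (0 : ℝ), HasDerivAt ψ 0 s := fun s (hs : 0 < s) => by
    have hF := ((hasDerivAt_levyIntegral hα₀ hα₁ (l := -s) (by simpa using hs)).comp (s : ℂ)
      (hasDerivAt_neg _)).comp_ofReal
    have hpow := ((Real.hasDerivAt_rpow_const (p := α) (Or.inl hs.ne')).ofReal_comp).const_mul
      ((Real.Gamma (1 - α) / α : ℝ) : ℂ)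
    refine (hF.add hpow).congr_deriv ?_
    have hα : (α : ℂ) ≠ 0 := by exact_mod_cast hα₀.ne'
    rw [integral_cexp_neg_mul_rpow_neg hα₁ hs]
    push_cast
    field_simp
    ring
  have hconst : EqOn ψ (fun _ => ψ 1) (Ioi 0) := fun s hs =>
    isOpen_Ioi.is_const_of_deriv_eq_zero isPreconnected_Ioi
      (fun s hs => (hψ' s hs).differentiableAt.differentiableWithinAt)
      (fun s hs => (hψ' s hs).deriv) hs (mem_Ioi.2 zero_lt_one)
  have hcont : ContinuousOn ψ (Ici 0) := by
    refine ((continuousOn_levyIntegral hα₀ hα₁).comp (by fun_prop) fun s (hs : 0 ≤ s) => ?_).add ?_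
    · simpa using hs
    · exact continuousOn_const.mul (continuous_ofReal.comp_continuousOn
        (continuousOn_id.rpow_const fun _ _ => Or.inr hα₀.le))
  have hext := hconst.of_subset_closure hcont continuousOn_const Ioi_subset_Ici_self
    (closure_Ioi (0 : ℝ)).ge
  have hψ0 : ψ 0 = 0 := by simp [ψ, levyIntegral, Real.zero_rpow hα₀.ne']
  have hψr : ψ r = 0 := (hext hr).trans ((hext (mem_Ici.2 le_rfl)).symm.trans hψ0)
  simp only [ψ] at hψr
  linear_combination hψr

lemma levyIntegral_eq {α : ℝ} (hα₀ : 0 < α) (hα₁ : α < 1) {l : ℂ} (hl : l.re ≤ 0) :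
    levyIntegral α l = -((Real.Gamma (1 - α) / α : ℝ) : ℂ) * (-l) ^ (α : ℂ) := by
  set g : ℂ → ℂ := fun l => -((Real.Gamma (1 - α) / α : ℝ) : ℂ) * (-l) ^ (α : ℂ)
  set U : Set ℂ := {l | l.re < 0}
  have hUopen : IsOpen U := isOpen_lt continuous_re continuous_const
  have hF : AnalyticOnNhd ℂ (levyIntegral α) U := DifferentiableOn.analyticOnNhd
    (fun l hl => (hasDerivAt_levyIntegral hα₀ hα₁ hl).differentiableAt.differentiableWithinAt)
    hUopen
  have hg : AnalyticOnNhd ℂ g U := DifferentiableOn.analyticOnNhd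
    (fun l (hl : l.re < 0) => (differentiableAt_const _).mul
      ((differentiableAt_neg_iff.2 differentiableAt_id).cpow_const
        (Or.inl (by simpa using hl))) |>.differentiableWithinAt) hUopen
  have hray : Tendsto (fun r : ℝ => -(r : ℂ)) (𝓝[≠] 1) (𝓝[≠] (-1)) :=
    tendsto_nhdsWithin_of_tendsto_nhds_of_eventually_within _
      ((continuous_ofReal.neg.tendsto' 1 (-1) (by simp)).mono_left nhdsWithin_le_nhds)
      (eventually_nhdsWithin_of_forall fun r (hr : r ≠ 1) => by simpa using hr)
  have hfreq : ∃ᶠ l in 𝓝[≠] (-1 : ℂ), levyIntegral α l = g l := by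
    refine hray.frequently (Eventually.frequently ?_)
    filter_upwards [nhdsWithin_le_nhds (lt_mem_nhds zero_lt_one)] with r hr
    rw [levyIntegral_neg_ofReal hα₀ hα₁ hr.le]
    simp only [g, neg_neg, ofReal_cpow hr.le]
  have hEqU : EqOn (levyIntegral α) g U :=
    hF.eqOn_of_preconnected_of_frequently_eq hg (convex_halfSpace_re_lt 0).isPreconnected
      (by simp [U]) hfreq
  have hgcont : ContinuousOn g {l | l.re ≤ 0} := fun l (hl : l.re ≤ 0) =>
    (continuousAt_const.mul ((continuousAt_cpow_const_of_re_pos (Or.inl (by simpa using hl))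
      (by simpa using hα₀)).comp continuousAt_neg)).continuousWithinAt
  exact hEqU.of_subset_closure (continuousOn_levyIntegral hα₀ hα₁) hgcont
    (fun l (hl : l.re < 0) => hl.le) (closure_setOfPred_re_lt 0).ge hl

lemma neg_I_mul_ofReal_cpow {t : ℝ} (ht : 0 < t) (a : ℝ) :
    (-(I * t)) ^ (a : ℂ) = ((t ^ a : ℝ) : ℂ) * cexp (-(π : ℂ) * I / 2 * a) := by
  have hne : -(I * t) ≠ 0 := by simp [ht.ne']
  have harg : arg (-(I * t)) = -(π / 2) := by
    rw [show -(I * t) = t * (-I) by ring, arg_real_mul _ ht, arg_neg_I]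
  have hnorm : ‖-(I * t)‖ = t := by simp [ht.le]
  rw [cpow_def_of_ne_zero hne, Complex.log, hnorm, harg, Real.rpow_def_of_pos ht, ofReal_exp,
    ← Complex.exp_add]
  congr 1
  push_cast
  ring

lemma integrableOn_div_one_add_sq_mul_rpow {α : ℝ} (hα₀ : 0 < α) (hα₁ : α < 1) :
    IntegrableOn (fun x : ℝ => x / (1 + x ^ 2) * x ^ (-(α + 1))) (Ioi 0) := by
  refine Integrable.mono' (integrableOn_min_mul_rpow hα₀ hα₁ zero_le_one)
    (by fun_prop : Measurable _).aestronglyMeasurable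
    (ae_restrict_of_forall_mem measurableSet_Ioi fun x (hx : 0 < x) => ?_)
  have hd : 0 < 1 + x ^ 2 := by positivity
  rw [Real.norm_of_nonneg (by positivity), one_mul]
  gcongr
  refine le_min ?_ ?_ <;> rw [div_le_iff₀ hd] <;> nlinarith

/-- for `0 < α < 1` and `t > 0`,
`∫₀^∞ (e^{itx} − 1 − itx/(1+x²)) x^{−(α+1)} dx = i c t − t^α e^{−iπα/2} Γ(1−α)/α`
for some real constant `c` depending only on `α`. -/
theorem integral_levy_kernel_alpha_lt_one (α : ℝ) (hα₀ : 0 < α) (hα₁ : α < 1) :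
    ∃ c : ℝ, ∀ t : ℝ, 0 < t →
      (∫ x in Ioi (0 : ℝ),
          (Complex.exp (Complex.I * t * x) - 1 - Complex.I * t * x / (1 + (x : ℂ) ^ 2))
            * ((x ^ (-(α + 1)) : ℝ) : ℂ))
        = Complex.I * c * t
            - ((t ^ α : ℝ) : ℂ) * Complex.exp (-(Real.pi : ℂ) * Complex.I / 2 * α)
              * (Real.Gamma (1 - α)) / α := by
  refine ⟨-∫ x in Ioi (0 : ℝ), x / (1 + x ^ 2) * x ^ (-(α + 1)), fun t ht => ?_⟩
  have hsplit : ∀ x : ℝ,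
      (cexp (I * t * x) - 1 - I * t * x / (1 + (x : ℂ) ^ 2)) * ((x ^ (-(α + 1)) : ℝ) : ℂ)
        = (cexp (I * t * x) - 1) * ((x ^ (-(α + 1)) : ℝ) : ℂ)
          - I * t * ((x / (1 + x ^ 2) * x ^ (-(α + 1)) : ℝ) : ℂ) := fun x => by
    have hd : (1 + (x : ℂ) ^ 2) ≠ 0 := by exact_mod_cast (by positivity : (1 + x ^ 2) ≠ 0)
    push_cast
    field_simp
  have hcorr : IntegrableOn (fun x : ℝ => I * t * ((x / (1 + x ^ 2) * x ^ (-(α + 1)) : ℝ) : ℂ))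
      (Ioi 0) := (integrableOn_div_one_add_sq_mul_rpow hα₀ hα₁).ofReal.const_mul _
  simp_rw [hsplit]
  rw [integral_sub (integrableOn_levyIntegrand hα₀ hα₁ (by simp)) hcorr, integral_const_mul,
    integral_complex_ofReal]
  change levyIntegral α (I * t) - _ = _
  rw [levyIntegral_eq hα₀ hα₁ (by simp), neg_I_mul_ofReal_cpow ht]
  push_cast
  ring
end

section
/- For α = 1 and t > 0, the integral I₁(t) = ∫₀^∞ (e^{itx} − 1 − itx/(1+x²)) x^{−2} dx equals i c t − (π/2) t − i t log t for some real constant c. -/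
open MeasureTheory Set Complex Real Filter Topology

/-
Substituting `x = u / t` turns the integral into `t` times the `t = 1` integral plus
`i t ∫₀^∞ (u / (t² + u²) - u / (1 + u²)) du = -i t log t`, so `c` is the imaginary part of the
`t = 1` integral. Its real part is `-∫₀^∞ (1 - cos u) / u² du = -π / 2`, computed by Fubini from
`1 / u² = ∫₀^∞ s e^{-su} ds` and the Laplace transform
`∫₀^∞ e^{-su} (1 - cos u) du = 1 / (s (1 + s²))`.
-/

lemma exp_neg_mul_mul_cos_eq_re {s u : ℝ} :
    Real.exp (-s * u) * Real.cos u = (Complex.exp ((-s + I) * u)).re := by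
  simp [Complex.exp_re]

lemma integrableOn_exp_neg_mul_mul_cos {s : ℝ} (hs : 0 < s) :
    IntegrableOn (fun u => Real.exp (-s * u) * Real.cos u) (Ioi 0) := by
  simp_rw [exp_neg_mul_mul_cos_eq_re]
  exact (integrableOn_exp_mul_complex_Ioi (by simpa using hs) 0).re

lemma integral_exp_neg_mul_mul_cos {s : ℝ} (hs : 0 < s) :
    ∫ u in Ioi 0, Real.exp (-s * u) * Real.cos u = s / (1 + s ^ 2) := by
  simp_rw [exp_neg_mul_mul_cos_eq_re]
  have h := integral_re (integrableOn_exp_mul_complex_Ioi (a := -s + I) (by simpa using hs) 0)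
  simp only [RCLike.re_to_complex] at h
  rw [h, integral_exp_mul_complex_Ioi (by simpa using hs)]
  simp only [ofReal_zero, mul_zero, Complex.exp_zero, div_re, neg_re, one_re, add_re, ofReal_re,
    I_re, add_zero, mul_neg, neg_mul, one_mul, neg_neg, normSq_apply, add_im, neg_im, ofReal_im,
    neg_zero, I_im, zero_add, mul_one, one_im, zero_div]
  field_simp
  ring

lemma integrableOn_exp_neg_mul_mul_one_sub_cos {s : ℝ} (hs : 0 < s) :
    IntegrableOn (fun u => Real.exp (-s * u) * (1 - Real.cos u)) (Ioi 0) := by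
  simp_rw [mul_one_sub]
  exact (integrableOn_exp_mul_Ioi (neg_neg_of_pos hs) 0).sub
    (integrableOn_exp_neg_mul_mul_cos hs)

lemma integral_exp_neg_mul_mul_one_sub_cos {s : ℝ} (hs : 0 < s) :
    ∫ u in Ioi 0, Real.exp (-s * u) * (1 - Real.cos u) = (s * (1 + s ^ 2))⁻¹ := by
  simp_rw [mul_one_sub]
  rw [integral_sub (integrableOn_exp_mul_Ioi (neg_neg_of_pos hs) 0)
    (integrableOn_exp_neg_mul_mul_cos hs), integral_exp_mul_Ioi (neg_neg_of_pos hs),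
    integral_exp_neg_mul_mul_cos hs, mul_zero, Real.exp_zero]
  field_simp
  ring

lemma integral_mul_exp_neg_mul {u : ℝ} (hu : 0 < u) :
    ∫ s in Ioi 0, s * Real.exp (-u * s) = (u ^ 2)⁻¹ := by
  simpa [neg_mul, Real.Gamma_two, show (2 : ℝ) - 1 = 1 by norm_num] using
    Real.integral_rpow_mul_exp_neg_mul_Ioi two_pos hu

lemma integral_mul_exp_neg_mul_mul_one_sub_cos {s : ℝ} (hs : 0 < s) :
    ∫ u in Ioi 0, s * Real.exp (-s * u) * (1 - Real.cos u) = (1 + s ^ 2)⁻¹ := by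
  simp_rw [mul_assoc]
  rw [integral_const_mul, integral_exp_neg_mul_mul_one_sub_cos hs]
  field_simp

lemma integrable_mul_exp_neg_mul_mul_one_sub_cos :
    Integrable (Function.uncurry fun s u => s * Real.exp (-s * u) * (1 - Real.cos u))
      ((volume.restrict (Ioi (0 : ℝ))).prod (volume.restrict (Ioi 0))) := by
  have hnonneg : ∀ s u : ℝ, 0 < s → 0 ≤ s * Real.exp (-s * u) * (1 - Real.cos u) :=
    fun s u hs => by have := Real.cos_le_one u; positivity
  rw [integrable_prod_iff (by fun_prop)]
  constructor
  · filter_upwards [ae_restrict_mem measurableSet_Ioi] with s (hs : 0 < s)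
    simpa only [Function.uncurry_apply_pair, mul_assoc] using
      (integrableOn_exp_neg_mul_mul_one_sub_cos hs).const_mul s
  · refine integrable_inv_one_add_sq.integrableOn.congr ?_
    filter_upwards [ae_restrict_mem measurableSet_Ioi] with s (hs : 0 < s)
    rw [← integral_mul_exp_neg_mul_mul_one_sub_cos hs]
    exact integral_congr_ae (ae_of_all _ fun u => (Real.norm_of_nonneg (hnonneg s u hs)).symm)

lemma integral_one_sub_cos_div_sq : ∫ u in Ioi 0, (1 - Real.cos u) / u ^ 2 = π / 2 := by
  have hswap := integral_integral_swap integrable_mul_exp_neg_mul_mul_one_sub_cos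
  calc ∫ u in Ioi 0, (1 - Real.cos u) / u ^ 2
      = ∫ u in Ioi 0, ∫ s in Ioi 0, s * Real.exp (-s * u) * (1 - Real.cos u) := by
        refine setIntegral_congr_fun measurableSet_Ioi fun u (hu : 0 < u) => ?_
        rw [div_eq_mul_inv, ← integral_mul_exp_neg_mul hu, ← integral_const_mul]
        exact integral_congr_ae (ae_of_all _ fun s => by ring_nf)
    _ = ∫ s in Ioi 0, (1 + s ^ 2)⁻¹ := by
        rw [← hswap]
        exact setIntegral_congr_fun measurableSet_Ioi fun s hs =>
          integral_mul_exp_neg_mul_mul_one_sub_cos hs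
    _ = π / 2 := by simp [integral_Ioi_inv_one_add_sq]

lemma abs_div_sq_add_sq_sub_div_one_add_sq_le {t u : ℝ} (ht : 0 < t) (hu : 0 ≤ u) :
    |u / (t ^ 2 + u ^ 2) - u / (1 + u ^ 2)| ≤ |1 - t ^ 2| / (2 * t) * (1 + u ^ 2)⁻¹ := by
  have hdiff : u / (t ^ 2 + u ^ 2) - u / (1 + u ^ 2)
      = (1 - t ^ 2) * (u / (t ^ 2 + u ^ 2)) * (1 + u ^ 2)⁻¹ := by
    field_simp
    ring
  have hamgm : u / (t ^ 2 + u ^ 2) ≤ 1 / (2 * t) := by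
    rw [div_le_div_iff₀ (by positivity) (by positivity)]
    nlinarith [sq_nonneg (t - u)]
  rw [hdiff, abs_mul, abs_mul, abs_of_nonneg (by positivity : 0 ≤ u / (t ^ 2 + u ^ 2)),
    abs_of_pos (by positivity : 0 < (1 + u ^ 2)⁻¹), div_eq_mul_one_div |1 - t ^ 2|]
  gcongr

lemma integrableOn_div_sq_add_sq_sub_div_one_add_sq {t : ℝ} (ht : 0 < t) :
    IntegrableOn (fun u => u / (t ^ 2 + u ^ 2) - u / (1 + u ^ 2)) (Ioi 0) := by
  refine Integrable.mono'
    (integrable_inv_one_add_sq.integrableOn.const_mul (|1 - t ^ 2| / (2 * t))) (by fun_prop) ?_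
  filter_upwards [ae_restrict_mem measurableSet_Ioi] with u (hu : 0 < u)
  exact abs_div_sq_add_sq_sub_div_one_add_sq_le ht hu.le

lemma integral_div_sq_add_sq_sub_div_one_add_sq {t : ℝ} (ht : 0 < t) :
    ∫ u in Ioi 0, (u / (t ^ 2 + u ^ 2) - u / (1 + u ^ 2)) = -Real.log t := by
  set G : ℝ → ℝ := fun u => (Real.log (t ^ 2 + u ^ 2) - Real.log (1 + u ^ 2)) / 2
  have hderiv : ∀ u ∈ Ici (0 : ℝ), HasDerivAt G (u / (t ^ 2 + u ^ 2) - u / (1 + u ^ 2)) u := by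
    intro u _
    have hlog (a : ℝ) (ha : 0 < a) :
        HasDerivAt (fun u : ℝ => Real.log (a + u ^ 2)) (2 * u / (a + u ^ 2)) u := by
      simpa using ((hasDerivAt_pow 2 u).const_add a).log (by positivity)
    exact (((hlog (t ^ 2) (by positivity)).fun_sub (hlog 1 one_pos)).div_const 2).congr_deriv
      (by ring)
  have hG : G = fun u => Real.log ((t ^ 2 + u ^ 2) / (1 + u ^ 2)) / 2 := by
    ext u
    rw [Real.log_div (by positivity) (by positivity)]
  have hratio : Tendsto (fun u : ℝ => (t ^ 2 + u ^ 2) / (1 + u ^ 2)) atTop (𝓝 1) := by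
    have h : ∀ u : ℝ, (t ^ 2 + u ^ 2) / (1 + u ^ 2) = 1 + (t ^ 2 - 1) * (1 + u ^ 2)⁻¹ :=
      fun u => by field_simp; ring
    have hden : Tendsto (fun u : ℝ => 1 + u ^ 2) atTop atTop :=
      tendsto_atTop_add_const_left _ _ (tendsto_pow_atTop two_ne_zero)
    simpa [h] using (hden.inv_tendsto_atTop.const_mul (t ^ 2 - 1)).const_add 1
  have hlim : Tendsto G atTop (𝓝 0) := by
    rw [hG]
    simpa using ((Real.continuousAt_log one_ne_zero).tendsto.comp hratio).div_const 2
  rw [integral_Ioi_of_hasDerivAt_of_tendsto' hderiv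
    (integrableOn_div_sq_add_sq_sub_div_one_add_sq ht) hlim]
  simp [G, Real.log_pow]

noncomputable def levyIntegrand (t x : ℝ) : ℂ :=
  (Complex.exp (I * t * x) - 1 - I * t * x / (1 + (x : ℂ) ^ 2)) * ((x ^ (-2 : ℝ) : ℝ) : ℂ)

lemma levyIntegrand_of_pos {t x : ℝ} (hx : 0 < x) :
    levyIntegrand t x =
      (Complex.exp (I * t * x) - 1 - I * t * x / (1 + (x : ℂ) ^ 2)) / (x : ℂ) ^ 2 := by
  rw [levyIntegrand, Real.rpow_neg hx.le, Real.rpow_two, div_eq_mul_inv]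
  push_cast
  rfl

lemma one_add_sq_ofReal_ne_zero (x : ℝ) : 1 + (x : ℂ) ^ 2 ≠ 0 := by
  exact_mod_cast (by positivity : (1 : ℝ) + x ^ 2 ≠ 0)

lemma norm_I_mul_div_one_add_sq (x : ℝ) : ‖I * x / (1 + (x : ℂ) ^ 2)‖ = |x| / (1 + x ^ 2) := by
  rw [show (1 + (x : ℂ) ^ 2) = ((1 + x ^ 2 : ℝ) : ℂ) by push_cast; rfl, norm_div, norm_mul,
    Complex.norm_I, one_mul, Complex.norm_real, Complex.norm_real, Real.norm_eq_abs,
    Real.norm_of_nonneg (by positivity)]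

lemma abs_div_one_add_sq_le_one (x : ℝ) : |x| / (1 + x ^ 2) ≤ 1 :=
  div_le_one_of_le₀ (by nlinarith [sq_abs x]) (by positivity)

lemma norm_exp_I_mul_sub_one_sub_div_le_three (x : ℝ) :
    ‖Complex.exp (I * x) - 1 - I * x / (1 + (x : ℂ) ^ 2)‖ ≤ 3 := by
  have hexp : ‖Complex.exp (I * x) - 1‖ ≤ 2 :=
    (norm_sub_le _ _).trans (by norm_num [Complex.norm_exp_I_mul_ofReal])
  have hcorr := norm_I_mul_div_one_add_sq x ▸ abs_div_one_add_sq_le_one x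
  linarith [norm_sub_le (Complex.exp (I * x) - 1) (I * x / (1 + (x : ℂ) ^ 2))]

lemma norm_exp_I_mul_sub_one_sub_div_le_of_abs_le_one {x : ℝ} (hx : |x| ≤ 1) :
    ‖Complex.exp (I * x) - 1 - I * x / (1 + (x : ℂ) ^ 2)‖ ≤ 2 * x ^ 2 := by
  have hsecond : ‖Complex.exp (I * x) - 1 - I * x‖ ≤ x ^ 2 := by
    simpa [sq_abs] using Complex.norm_exp_sub_one_sub_id_le (x := I * x) (by simpa using hx)
  have hcorr : ‖I * x - I * x / (1 + (x : ℂ) ^ 2)‖ ≤ x ^ 2 := by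
    have h : I * x - I * x / (1 + (x : ℂ) ^ 2) = x ^ 2 * (I * x / (1 + (x : ℂ) ^ 2)) := by
      field_simp [one_add_sq_ofReal_ne_zero x]
      ring
    rw [h, norm_mul, norm_I_mul_div_one_add_sq, norm_pow, Complex.norm_real, Real.norm_eq_abs,
      sq_abs]
    exact mul_le_of_le_one_right (sq_nonneg x) (abs_div_one_add_sq_le_one x)
  calc _ = ‖(Complex.exp (I * x) - 1 - I * x) + (I * x - I * x / (1 + (x : ℂ) ^ 2))‖ := by
        ring_nf
    _ ≤ x ^ 2 + x ^ 2 := (norm_add_le _ _).trans (add_le_add hsecond hcorr)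
    _ = 2 * x ^ 2 := by ring

lemma norm_exp_I_mul_sub_one_sub_div_le (x : ℝ) :
    ‖Complex.exp (I * x) - 1 - I * x / (1 + (x : ℂ) ^ 2)‖ ≤ 6 * x ^ 2 / (1 + x ^ 2) := by
  rw [le_div_iff₀ (by positivity)]
  rcases le_or_gt |x| 1 with hx | hx
  · have hx2 : x ^ 2 ≤ 1 := by nlinarith [sq_abs x, abs_nonneg x]
    nlinarith [norm_exp_I_mul_sub_one_sub_div_le_of_abs_le_one hx,
      norm_nonneg (Complex.exp (I * x) - 1 - I * x / (1 + (x : ℂ) ^ 2))]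
  · have hx2 : 1 ≤ x ^ 2 := by nlinarith [sq_abs x]
    nlinarith [norm_exp_I_mul_sub_one_sub_div_le_three x]

lemma norm_levyIntegrand_one_le {x : ℝ} (hx : 0 < x) :
    ‖levyIntegrand 1 x‖ ≤ 6 * (1 + x ^ 2)⁻¹ := by
  rw [levyIntegrand_of_pos hx, norm_div, norm_pow, Complex.norm_real, Real.norm_of_nonneg hx.le,
    div_le_iff₀ (by positivity)]
  calc _ ≤ 6 * x ^ 2 / (1 + x ^ 2) := by simpa using norm_exp_I_mul_sub_one_sub_div_le x
    _ = _ := by ring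

lemma integrableOn_levyIntegrand_one : IntegrableOn (levyIntegrand 1) (Ioi 0) := by
  refine Integrable.mono' (integrable_inv_one_add_sq.integrableOn.const_mul 6) ?_ ?_
  · have hmeas : Measurable (levyIntegrand 1) := by unfold levyIntegrand; fun_prop
    exact hmeas.aestronglyMeasurable
  · filter_upwards [ae_restrict_mem measurableSet_Ioi] with x hx
    exact norm_levyIntegrand_one_le hx

lemma re_levyIntegrand_one {u : ℝ} (hu : 0 < u) :
    (levyIntegrand 1 u).re = -((1 - Real.cos u) / u ^ 2) := by
  rw [levyIntegrand_of_pos hu]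
  have hcorr : (I * u / (1 + (u : ℂ) ^ 2)).re = 0 := by
    rw [show (1 + (u : ℂ) ^ 2) = ((1 + u ^ 2 : ℝ) : ℂ) by push_cast; rfl, Complex.div_ofReal_re]
    simp
  rw [← ofReal_pow, Complex.div_ofReal_re]
  simp only [ofReal_one, mul_one, ofReal_pow, sub_re, exp_re, mul_re, I_re, ofReal_re, zero_mul,
    I_im, ofReal_im, mul_zero, sub_self, Real.exp_zero, mul_im, one_mul, zero_add, one_re, hcorr,
    sub_zero]
  ring

lemma levyIntegrand_inv_mul {t u : ℝ} (ht : 0 < t) (hu : 0 < u) :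
    levyIntegrand t (t⁻¹ * u) =
      (t : ℂ) ^ 2 *
        (levyIntegrand 1 u + I * ((u / (t ^ 2 + u ^ 2) - u / (1 + u ^ 2) : ℝ) : ℂ)) := by
  rw [levyIntegrand_of_pos (by positivity), levyIntegrand_of_pos hu]
  have ht' : (t : ℂ) ≠ 0 := by exact_mod_cast ht.ne'
  have hu' : (u : ℂ) ≠ 0 := by exact_mod_cast hu.ne'
  have h1 := one_add_sq_ofReal_ne_zero u
  have h2 : (t : ℂ) ^ 2 + (u : ℂ) ^ 2 ≠ 0 := by
    exact_mod_cast (by positivity : t ^ 2 + u ^ 2 ≠ 0)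
  push_cast
  field_simp
  ring

lemma integral_levyIntegrand {t : ℝ} (ht : 0 < t) :
    ∫ x in Ioi 0, levyIntegrand t x
      = t * (∫ u in Ioi 0, levyIntegrand 1 u) - I * t * (Real.log t : ℂ) := by
  set h : ℝ → ℝ := fun u => u / (t ^ 2 + u ^ 2) - u / (1 + u ^ 2)
  calc ∫ x in Ioi 0, levyIntegrand t x
      = t⁻¹ • ∫ u in Ioi 0, levyIntegrand t (t⁻¹ * u) := by
        rw [integral_comp_mul_left_Ioi _ _ (inv_pos.2 ht), mul_zero, inv_inv, smul_smul,
          inv_mul_cancel₀ ht.ne', one_smul]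
    _ = t⁻¹ • ∫ u in Ioi 0, (t : ℂ) ^ 2 * (levyIntegrand 1 u + I * (h u : ℂ)) := by
        congr 1
        exact setIntegral_congr_fun measurableSet_Ioi fun u hu => levyIntegrand_inv_mul ht hu
    _ = t⁻¹ • ((t : ℂ) ^ 2 *
          ((∫ u in Ioi 0, levyIntegrand 1 u) + I * ((∫ u in Ioi 0, h u : ℝ) : ℂ))) := by
        rw [integral_const_mul, integral_add integrableOn_levyIntegrand_one
          ((integrableOn_div_sq_add_sq_sub_div_one_add_sq ht : IntegrableOn h _).ofReal.const_mul
            I), integral_const_mul, integral_complex_ofReal]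
    _ = _ := by
        rw [integral_div_sq_add_sq_sub_div_one_add_sq ht, Complex.real_smul]
        have ht' : (t : ℂ) ≠ 0 := by exact_mod_cast ht.ne'
        push_cast
        field_simp
        ring

lemma re_integral_levyIntegrand_one : (∫ u in Ioi 0, levyIntegrand 1 u).re = -(π / 2) := by
  have h := integral_re integrableOn_levyIntegrand_one
  simp only [RCLike.re_to_complex] at h
  rw [← h, setIntegral_congr_fun measurableSet_Ioi fun u hu => re_levyIntegrand_one hu,
    integral_neg, integral_one_sub_cos_div_sq]

/-- for `α = 1` and `t > 0`,
`∫₀^∞ (e^{itx} − 1 − itx/(1+x²)) x^{−2} dx = i c t − (π/2) t − i t log t`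
for some real constant `c`. -/
theorem integral_levy_kernel_alpha_eq_one :
    ∃ c : ℝ, ∀ t : ℝ, 0 < t →
      (∫ x in Ioi (0 : ℝ),
          (Complex.exp (Complex.I * t * x) - 1 - Complex.I * t * x / (1 + (x : ℂ) ^ 2))
            * ((x ^ (-2 : ℝ) : ℝ) : ℂ))
        = Complex.I * c * t - (Real.pi / 2 : ℝ) * t
            - Complex.I * t * ((Real.log t : ℝ) : ℂ) := by
  refine ⟨(∫ u in Ioi 0, levyIntegrand 1 u).im, fun t ht => ?_⟩
  change ∫ x in Ioi 0, levyIntegrand t x = _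
  rw [integral_levyIntegrand ht]
  conv_lhs => rw [← re_add_im (∫ u in Ioi 0, levyIntegrand 1 u), re_integral_levyIntegrand_one]
  push_cast
  ring
end

section
/- Suppose W ≥ 0 satisfies the fixed-point equation W = ∑_{j≥1} T_j^α W_j in distribution, where (W_j) are i.i.d. copies of W independent of T = (T_j). If Y₁, Y₂, … are i.i.d. S_α(σ, β, 0)-stable random variables (α ∈ (0,2)\{1}) independent of everything else, then X := W^{1/α} Y (with Y independent of W) satisfies X = ∑_{j≥1} T_j X_j in distribution, where X_j are i.i.d. copies of X independent of T. -/
open MeasureTheory ProbabilityTheory Complex Real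

/-!
Let `ψ = stableExponent σ β α`, so that `E[exp (i t Y)] = exp (-ψ t)`, and let
`L z = E[exp (z W)]` be the complex moment generating function of `W`. Conditioning on `W` and
using the scaling `ψ (c t) = c^α ψ t` for `c ≥ 0`, the characteristic function of `W^{1/α} Y` is
`φ t = L (-ψ t)`, and `Re (ψ t) ≥ 0`. The fixed-point equation of `W` reads
`L s = E[∏_j L (T_j^α s)]` for real `s ≤ 0`. Both sides are holomorphic on the left half-plane:
the right-hand side is the integral of a uniformly bounded family of holomorphic functions, each
a finite product. By the identity theorem the equation holds at `z = -ψ t`, and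
`ψ (T_j t) = T_j^α ψ t` turns it into `φ t = E[∏_j φ (T_j t)]`.
-/

open Filter Topology Metric Set

section HolomorphicIntegral

variable {Θ E : Type*} [MeasurableSpace Θ] {ν : Measure Θ}
  [NormedAddCommGroup E]

theorem aestronglyMeasurable_deriv_of_differentiableAt {𝕜 : Type*} [NontriviallyNormedField 𝕜]
    [NormedSpace 𝕜 E]
    {F : 𝕜 → Θ → E} {x₀ : 𝕜} (hF : ∀ x, AEStronglyMeasurable (F x) ν)
    (hd : ∀ᵐ θ ∂ν, DifferentiableAt 𝕜 (F · θ) x₀) :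
    AEStronglyMeasurable (fun θ ↦ deriv (F · θ) x₀) ν :=
  aestronglyMeasurable_of_tendsto_ae (𝓝[≠] x₀)
    (fun x ↦ ((hF x).sub (hF x₀)).const_smul ((x - x₀)⁻¹))
    (hd.mono fun _ h ↦ h.hasDerivAt.tendsto_slope)

theorem differentiableOn_integral_of_norm_le [NormedSpace ℂ E] [CompleteSpace E]
    [IsFiniteMeasure ν] {F : ℂ → Θ → E} {U : Set ℂ} {C : ℝ} (hU : IsOpen U)
    (hF : ∀ z, AEStronglyMeasurable (F z) ν) (hd : ∀ᵐ θ ∂ν, DifferentiableOn ℂ (F · θ) U)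
    (hC : ∀ᵐ θ ∂ν, ∀ z ∈ U, ‖F z θ‖ ≤ C) :
    DifferentiableOn ℂ (fun z ↦ ∫ θ, F z θ ∂ν) U := by
  intro z₀ hz₀
  obtain ⟨ε, hε, hball⟩ := Metric.isOpen_iff.1 hU z₀ hz₀
  have hdiffAt : ∀ᵐ θ ∂ν, ∀ x ∈ U, HasDerivAt (F · θ) (deriv (F · θ) x) x :=
    hd.mono fun θ h x hx ↦ ((h x hx).differentiableAt (hU.mem_nhds hx)).hasDerivAt
  have hbound : ∀ᵐ θ ∂ν, ∀ x ∈ ball z₀ (ε / 2), ‖deriv (F · θ) x‖ ≤ C / (ε / 4) := by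
    filter_upwards [hd, hC] with θ hθd hθC x hx
    have hsub : closedBall x (ε / 4) ⊆ U := fun y hy ↦ hball <| by
      rw [mem_ball] at hx ⊢; rw [mem_closedBall] at hy
      linarith [dist_triangle y x z₀]
    exact Complex.norm_deriv_le_of_forall_mem_sphere_norm_le (by positivity)
      (hθd.diffContOnCl_ball hsub) fun y hy ↦ hθC y (hsub (sphere_subset_closedBall hy))
  have key := hasDerivAt_integral_of_dominated_loc_of_deriv_le (ball_mem_nhds z₀ (by positivity))
    (Eventually.of_forall hF) (Integrable.of_bound (hF z₀) C (hC.mono fun θ h ↦ h z₀ hz₀))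
    (aestronglyMeasurable_deriv_of_differentiableAt hF
      (hd.mono fun θ h ↦ (h z₀ hz₀).differentiableAt (hU.mem_nhds hz₀)))
    hbound (integrable_const _)
    (hdiffAt.mono fun θ h x hx ↦ h x (hball (ball_subset_ball (by linarith) hx)))
  exact key.2.differentiableAt.differentiableWithinAt

end HolomorphicIntegral

theorem eqOn_re_neg_of_eq_ofReal {E : Type*} [NormedAddCommGroup E] [NormedSpace ℂ E]
    [CompleteSpace E] {f g : ℂ → E} (hf : DifferentiableOn ℂ f {z | z.re < 0})
    (hg : DifferentiableOn ℂ g {z | z.re < 0}) (hfg : ∀ s : ℝ, s < 0 → f s = g s) :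
    EqOn f g {z | z.re < 0} := by
  have hU : IsOpen {z : ℂ | z.re < 0} := isOpen_lt continuous_re continuous_const
  have hreal : Tendsto ((↑) : ℝ → ℂ) (𝓝[≠] (-1)) (𝓝[≠] (-1)) := by
    simpa using continuous_ofReal.continuousWithinAt.tendsto_nhdsWithin
      (x := (-1 : ℝ)) (s := {-1}ᶜ) (t := {-1}ᶜ) fun x hx ↦ by
        rwa [mem_compl_iff, mem_singleton_iff, ← ofReal_one, ← ofReal_neg, ofReal_inj]
  have hneg : ∀ᶠ s : ℝ in 𝓝[≠] (-1), s < 0 :=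
    nhdsWithin_le_nhds (eventually_lt_nhds (by norm_num))
  refine (hf.analyticOnNhd hU).eqOn_of_preconnected_of_frequently_eq (hg.analyticOnNhd hU)
    (convex_halfSpace_re_lt 0).isPreconnected (z₀ := -1) (by simp) ?_
  exact hreal.frequently (hneg.mono hfg).frequently

theorem ProbabilityTheory.IndepFun.integral_comp_eq_integral_integral {Ω α β E : Type*}
    {mΩ : MeasurableSpace Ω} {μ : Measure Ω} [IsFiniteMeasure μ]
    [MeasurableSpace α] [MeasurableSpace β] [NormedAddCommGroup E] [NormedSpace ℝ E]
    {X : Ω → α} {Y : Ω → β} (hXY : IndepFun X Y μ) (hX : Measurable X) (hY : Measurable Y)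
    {g : α → β → E} (hg : StronglyMeasurable (Function.uncurry g))
    (hg_int : Integrable (Function.uncurry g) ((μ.map X).prod (μ.map Y))) :
    ∫ ω, g (X ω) (Y ω) ∂μ = ∫ ω, ∫ ω', g (X ω) (Y ω') ∂μ ∂μ := by
  have hmap : μ.map (fun ω ↦ (X ω, Y ω)) = (μ.map X).prod (μ.map Y) :=
    (indepFun_iff_map_prod_eq_prod_map_map hX.aemeasurable hY.aemeasurable).1 hXY
  calc ∫ ω, g (X ω) (Y ω) ∂μ = ∫ p, Function.uncurry g p ∂(μ.map fun ω ↦ (X ω, Y ω)) :=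
        (integral_map (hX.prodMk hY).aemeasurable hg.aestronglyMeasurable).symm
    _ = ∫ x, ∫ y, g x y ∂(μ.map Y) ∂(μ.map X) := by rw [hmap, integral_prod _ hg_int]; rfl
    _ = ∫ ω, ∫ y, g (X ω) y ∂(μ.map Y) ∂μ :=
        integral_map hX.aemeasurable hg.integral_prod_right'.aestronglyMeasurable
    _ = ∫ ω, ∫ ω', g (X ω) (Y ω') ∂μ ∂μ := by
        congr 1 with ω
        exact integral_map hY.aemeasurable
          (hg.comp_measurable measurable_prodMk_left).aestronglyMeasurable

theorem Real.sign_mul_of_pos {c : ℝ} (hc : 0 < c) (t : ℝ) : Real.sign (c * t) = Real.sign t := by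
  rcases lt_trichotomy t 0 with ht | rfl | ht
  · rw [Real.sign_of_neg (mul_neg_of_pos_of_neg hc ht), Real.sign_of_neg ht]
  · rw [mul_zero]
  · rw [Real.sign_of_pos (mul_pos hc ht), Real.sign_of_pos ht]

noncomputable def stableExponent (σ β α t : ℝ) : ℂ :=
  (σ ^ α * |t| ^ α : ℝ) * (1 - I * (β * Real.sign t * Real.tan (π * α / 2) : ℝ))

theorem stableExponent_mul_of_nonneg {σ β α : ℝ} (hα : α ≠ 0) {c : ℝ} (hc : 0 ≤ c) (t : ℝ) :
    stableExponent σ β α (c * t) = (c ^ α : ℝ) * stableExponent σ β α t := by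
  rcases hc.eq_or_lt with rfl | hc
  · simp [stableExponent, Real.zero_rpow hα]
  · rw [stableExponent, stableExponent, Real.sign_mul_of_pos hc, abs_mul, abs_of_pos hc,
      Real.mul_rpow hc.le (abs_nonneg t)]
    push_cast
    ring

theorem stableExponent_re (σ β α t : ℝ) : (stableExponent σ β α t).re = σ ^ α * |t| ^ α := by
  simp only [stableExponent, mul_re, ofReal_re, ofReal_im, sub_re, sub_im, one_re, one_im, I_re,
    I_im]
  ring

theorem stableExponent_eq_zero_or_re_pos {σ : ℝ} (hσ : 0 ≤ σ) (β α t : ℝ) :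
    stableExponent σ β α t = 0 ∨ 0 < (stableExponent σ β α t).re := by
  rcases (mul_nonneg (Real.rpow_nonneg hσ α) (Real.rpow_nonneg (abs_nonneg t) α)).eq_or_lt
    with h | h
  · left; rw [stableExponent, ← h, ofReal_zero, zero_mul]
  · right; rwa [stableExponent_re]

section RandomProduct

variable {Θ : Type*} [MeasurableSpace Θ] {ν : Measure Θ} {f : ℂ → ℂ}

theorem tprod_comp_mul_eq_prod (hf0 : f 0 = 1) {c : ℕ → ℝ} (hc : {j | c j ≠ 0}.Finite) (z : ℂ) :
    ∏' j, f (c j * z) = ∏ j ∈ hc.toFinset, f (c j * z) :=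
  tprod_eq_prod fun j hj ↦ by
    rw [hc.mem_toFinset, mem_ofPred_eq, not_not] at hj
    rw [hj, ofReal_zero, zero_mul, hf0]

theorem norm_comp_mul_le_one (hf0 : f 0 = 1) (hf_le : ∀ z : ℂ, z.re < 0 → ‖f z‖ ≤ 1)
    {c : ℝ} (hc : 0 ≤ c) {z : ℂ} (hz : z.re < 0) : ‖f (c * z)‖ ≤ 1 := by
  rcases hc.eq_or_lt with rfl | hc
  · simp [hf0]
  · exact hf_le _ (by simpa [re_ofReal_mul] using mul_neg_of_pos_of_neg hc hz)

theorem differentiableOn_comp_mul (hf : DifferentiableOn ℂ f {z | z.re < 0}) {c : ℝ}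
    (hc : 0 ≤ c) : DifferentiableOn ℂ (fun z ↦ f (c * z)) {z | z.re < 0} := by
  rcases hc.eq_or_lt with rfl | hc
  · simp [differentiableOn_const]
  · refine hf.comp ((differentiable_id.const_mul _).differentiableOn) fun z hz ↦ ?_
    simpa [re_ofReal_mul] using mul_neg_of_pos_of_neg hc hz

theorem differentiableOn_integral_tprod_comp_mul [IsFiniteMeasure ν] (hf_meas : Measurable f)
    (hf0 : f 0 = 1) (hf_le : ∀ z : ℂ, z.re < 0 → ‖f z‖ ≤ 1)
    (hf : DifferentiableOn ℂ f {z | z.re < 0}) {a : ℕ → Θ → ℝ} (ha_meas : ∀ j, Measurable (a j))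
    (ha : ∀ j θ, 0 ≤ a j θ) (ha_fin : ∀ᵐ θ ∂ν, {j | a j θ ≠ 0}.Finite) :
    DifferentiableOn ℂ (fun z ↦ ∫ θ, ∏' j, f (a j θ * z) ∂ν) {z | z.re < 0} := by
  refine differentiableOn_integral_of_norm_le (C := 1) (isOpen_lt continuous_re continuous_const)
    (fun z ↦ ?_) ?_ ?_
  · exact AEStronglyMeasurable.tprod fun j ↦
      (hf_meas.comp ((measurable_ofReal.comp (ha_meas j)).mul_const z)).aestronglyMeasurable
  · filter_upwards [ha_fin] with θ hθ
    exact (DifferentiableOn.fun_finsetProd fun j _ ↦ differentiableOn_comp_mul hf (ha j θ)).congr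
      fun z _ ↦ tprod_comp_mul_eq_prod hf0 hθ z
  · filter_upwards [ha_fin] with θ hθ z hz
    rw [tprod_comp_mul_eq_prod hf0 hθ z, Complex.norm_prod]
    exact Finset.prod_le_one (fun _ _ ↦ norm_nonneg _)
      fun j _ ↦ norm_comp_mul_le_one hf0 hf_le (ha j θ) hz

end RandomProduct

section ComplexMGF

variable {Ω : Type*} {mΩ : MeasurableSpace Ω} {μ : Measure Ω} {W : Ω → ℝ}

theorem ProbabilityTheory.complexMGF_zero [IsProbabilityMeasure μ] : complexMGF W μ 0 = 1 := by
  simp [complexMGF]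

theorem ProbabilityTheory.norm_complexMGF_le_one [IsProbabilityMeasure μ] (hW0 : ∀ ω, 0 ≤ W ω)
    {z : ℂ} (hz : z.re ≤ 0) : ‖complexMGF W μ z‖ ≤ 1 := by
  rw [complexMGF]
  simpa using norm_integral_le_of_norm_le_const (μ := μ) (C := 1) (ae_of_all _ fun ω ↦ by
    simpa [norm_exp, re_mul_ofReal] using mul_nonpos_of_nonpos_of_nonneg hz (hW0 ω))

theorem ProbabilityTheory.measurable_complexMGF [SFinite μ] (hW : Measurable W) :
    Measurable (complexMGF W μ) :=
  (Measurable.stronglyMeasurable (by fun_prop) :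
    StronglyMeasurable fun p : ℂ × Ω ↦ cexp (p.1 * W p.2)).integral_prod_right'.measurable

theorem ProbabilityTheory.differentiableOn_complexMGF_of_nonneg [IsFiniteMeasure μ]
    (hW : Measurable W) (hW0 : ∀ ω, 0 ≤ W ω) :
    DifferentiableOn ℂ (complexMGF W μ) {z | z.re < 0} := by
  have hIic : Iic 0 ⊆ integrableExpSet W μ := fun s hs ↦
    Integrable.of_bound (by fun_prop) 1 (ae_of_all _ fun ω ↦ by
      simpa [abs_of_pos (Real.exp_pos _)] using mul_nonpos_of_nonpos_of_nonneg hs (hW0 ω))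
  exact differentiableOn_complexMGF.mono fun z hz ↦
    interior_mono hIic (by rwa [interior_Iic])

end ComplexMGF

theorem ProbabilityTheory.complexMGF_eq_integral_tprod_of_mgf {Ω Θ : Type*}
    {mΩ : MeasurableSpace Ω} {μ : Measure Ω} [IsProbabilityMeasure μ]
    {mΘ : MeasurableSpace Θ} {ν : Measure Θ} [IsFiniteMeasure ν]
    {W : Ω → ℝ} (hW : Measurable W) (hW0 : ∀ ω, 0 ≤ W ω)
    {a : ℕ → Θ → ℝ} (ha_meas : ∀ j, Measurable (a j)) (ha : ∀ j θ, 0 ≤ a j θ)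
    (ha_fin : ∀ᵐ θ ∂ν, {j | a j θ ≠ 0}.Finite)
    (hfix : ∀ s : ℝ, s < 0 → mgf W μ s = ∫ θ, ∏' j, mgf W μ (a j θ * s) ∂ν)
    {z : ℂ} (hz : z.re < 0) :
    complexMGF W μ z = ∫ θ, ∏' j, complexMGF W μ (a j θ * z) ∂ν := by
  refine eqOn_re_neg_of_eq_ofReal (differentiableOn_complexMGF_of_nonneg hW hW0)
    (differentiableOn_integral_tprod_comp_mul (measurable_complexMGF hW) complexMGF_zero
      (fun z hz ↦ norm_complexMGF_le_one hW0 hz.le) (differentiableOn_complexMGF_of_nonneg hW hW0)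
      ha_meas ha ha_fin) (fun s hs ↦ ?_) hz
  rw [complexMGF_ofReal, hfix s hs, ← integral_complex_ofReal]
  refine integral_congr_ae (ha_fin.mono fun θ hθ ↦ ?_)
  simp_rw [← ofReal_mul, complexMGF_ofReal]
  exact isometry_ofReal.isClosedEmbedding.map_tprod (g := ofRealHom) _

theorem integral_cexp_rpow_mul_eq_complexMGF {Ω : Type*} {mΩ : MeasurableSpace Ω}
    {μ : Measure Ω} [IsFiniteMeasure μ] {W Y : Ω → ℝ} (hW : Measurable W)
    (hY : Measurable Y) (hW0 : ∀ ω, 0 ≤ W ω) (hWY : IndepFun W Y μ) {σ β α : ℝ} (hα : α ≠ 0)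
    (hY_cf : ∀ t : ℝ, ∫ ω, cexp (I * t * Y ω) ∂μ = cexp (-stableExponent σ β α t)) (t : ℝ) :
    ∫ ω, cexp (I * t * ↑(W ω ^ (1 / α) * Y ω)) ∂μ = complexMGF W μ (-stableExponent σ β α t) := by
  have hg :
      StronglyMeasurable (Function.uncurry fun w y : ℝ ↦ cexp (I * t * ↑(w ^ (1 / α) * y))) :=
    Measurable.stronglyMeasurable (by unfold Function.uncurry; fun_prop)
  rw [hWY.integral_comp_eq_integral_integral hW hY hg
    (Integrable.of_bound hg.aestronglyMeasurable 1 (ae_of_all _ fun _ ↦ by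
      simp [Function.uncurry, norm_exp, mul_re])),
    complexMGF]
  refine integral_congr_ae (ae_of_all _ fun ω ↦ ?_)
  calc ∫ ω', cexp (I * t * ↑(W ω ^ (1 / α) * Y ω')) ∂μ
      = ∫ ω', cexp (I * ↑(W ω ^ (1 / α) * t) * Y ω') ∂μ := by
        congr 1 with ω'; push_cast; ring_nf
    _ = cexp (-stableExponent σ β α t * W ω) := by
        rw [hY_cf, stableExponent_mul_of_nonneg hα (Real.rpow_nonneg (hW0 ω) _), one_div,
          Real.rpow_inv_rpow (hW0 ω) hα]
        ring_nf

theorem stable_mixture_solves_smoothing_fixed_point_general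
    {Ω : Type*} {mΩ : MeasurableSpace Ω} (μ : Measure Ω) [IsProbabilityMeasure μ]
    {Θ : Type*} {mΘ : MeasurableSpace Θ} (ν : Measure Θ) [IsProbabilityMeasure ν]
    (T : ℕ → Θ → ℝ) (hTmeas : ∀ j, Measurable (T j)) (hTnonneg : ∀ j θ, 0 ≤ T j θ)
    (hfin : ∀ᵐ θ ∂ν, {j | 0 < T j θ}.Finite)
    (W Y : Ω → ℝ) (hWmeas : Measurable W) (hYmeas : Measurable Y)
    (hWnonneg : ∀ ω, 0 ≤ W ω) (hindep : IndepFun W Y μ)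
    (α σ β : ℝ) (hα : α ∈ Set.Ioo (0 : ℝ) 2)
    (hσ : 0 ≤ σ)
    -- `W` solves the fixed-point equation `W ≜ ∑_j T_j^α W_j`, in Laplace-transform form:
    (hWfix : ∀ s : ℝ, 0 ≤ s →
      (∫ ω, Real.exp (-(s * W ω)) ∂μ)
        = ∫ θ, ∏' j : ℕ, (∫ ω, Real.exp (-((T j θ) ^ α * s * W ω)) ∂μ) ∂ν)
    -- `Y` is strictly `α`-stable with parameters `(σ, β, 0)`:
    (hY : ∀ t : ℝ, (∫ ω, Complex.exp (Complex.I * t * Y ω) ∂μ)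
      = Complex.exp (-(Complex.ofReal (σ ^ α * |t| ^ α))
          * (1 - Complex.I * β * Real.sign t * Real.tan (Real.pi * α / 2))))
    (φ : ℝ → ℂ)
    (hφ : ∀ t : ℝ, φ t = ∫ ω, Complex.exp (Complex.I * t
        * Complex.ofReal (W ω ^ (1 / α) * Y ω)) ∂μ) :
    ∀ t : ℝ, φ t = ∫ θ, ∏' j : ℕ, φ (T j θ * t) ∂ν := by
  intro t
  have hα0 : α ≠ 0 := hα.1.ne'
  have hφ_mgf (u : ℝ) : φ u = complexMGF W μ (-stableExponent σ β α u) :=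
    (hφ u).trans <| integral_cexp_rpow_mul_eq_complexMGF hWmeas hYmeas hWnonneg hindep hα0
      (fun u ↦ (hY u).trans (by rw [stableExponent]; push_cast; ring_nf)) u
  have hφ_factor (θ : Θ) (j : ℕ) :
      φ (T j θ * t) = complexMGF W μ ((T j θ ^ α : ℝ) * -stableExponent σ β α t) := by
    rw [hφ_mgf, stableExponent_mul_of_nonneg hα0 (hTnonneg j θ), mul_neg]
  have hmgf (s : ℝ) (hs : s < 0) : mgf W μ s = ∫ θ, ∏' j, mgf W μ (T j θ ^ α * s) ∂ν := by
    simpa [mgf, mul_comm, mul_assoc] using hWfix (-s) (by linarith)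
  have hfin_rpow : ∀ᵐ θ ∂ν, {j | T j θ ^ α ≠ 0}.Finite := hfin.mono fun θ h ↦
    h.subset fun j hj ↦ (hTnonneg j θ).lt_of_ne' fun h0 ↦ hj (by rw [h0, Real.zero_rpow hα0])
  simp_rw [hφ_factor, hφ_mgf]
  rcases stableExponent_eq_zero_or_re_pos hσ β α t with h | h
  · simp [h, complexMGF_zero]
  · exact complexMGF_eq_integral_tprod_of_mgf hWmeas hWnonneg (fun j ↦ (hTmeas j).pow_const α)
      (fun j θ ↦ Real.rpow_nonneg (hTnonneg j θ) α) hfin_rpow hmgf (by simpa using h)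

/-- if `W ≥ 0` solves `W ≜ ∑_j T_j^α W_j` and `Y ~ S_α(σ,β,0)` is independent of
`W`, then the law of `X = W^{1/α} Y` is a fixed point of the smoothing transform associated
with `T`: its characteristic function `φ` satisfies `φ(t) = E[∏_j φ(T_j t)]`. -/
theorem stable_mixture_solves_smoothing_fixed_point
    {Ω : Type*} {mΩ : MeasurableSpace Ω} (μ : Measure Ω) [IsProbabilityMeasure μ]
    {Θ : Type*} {mΘ : MeasurableSpace Θ} (ν : Measure Θ) [IsProbabilityMeasure ν]
    (T : ℕ → Θ → ℝ) (hTmeas : ∀ j, Measurable (T j)) (hTnonneg : ∀ j θ, 0 ≤ T j θ)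
    (hfin : ∀ᵐ θ ∂ν, {j | 0 < T j θ}.Finite)
    (W Y : Ω → ℝ) (hWmeas : Measurable W) (hYmeas : Measurable Y)
    (hWnonneg : ∀ ω, 0 ≤ W ω) (hindep : IndepFun W Y μ)
    (α σ β : ℝ) (hα : α ∈ Set.Ioo (0 : ℝ) 2) (hα1 : α ≠ 1)
    (hσ : 0 ≤ σ) (hβ : β ∈ Set.Icc (-1 : ℝ) 1)
    -- `W` solves the fixed-point equation `W ≜ ∑_j T_j^α W_j`, in Laplace-transform form:
    (hWfix : ∀ s : ℝ, 0 ≤ s →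
      (∫ ω, Real.exp (-(s * W ω)) ∂μ)
        = ∫ θ, ∏' j : ℕ, (∫ ω, Real.exp (-((T j θ) ^ α * s * W ω)) ∂μ) ∂ν)
    -- `Y` is strictly `α`-stable with parameters `(σ, β, 0)`:
    (hY : ∀ t : ℝ, (∫ ω, Complex.exp (Complex.I * t * Y ω) ∂μ)
      = Complex.exp (-(Complex.ofReal (σ ^ α * |t| ^ α))
          * (1 - Complex.I * β * Real.sign t * Real.tan (Real.pi * α / 2))))
    (φ : ℝ → ℂ)
    (hφ : ∀ t : ℝ, φ t = ∫ ω, Complex.exp (Complex.I * t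
        * Complex.ofReal (W ω ^ (1 / α) * Y ω)) ∂μ) :
    ∀ t : ℝ, φ t = ∫ θ, ∏' j : ℕ, φ (T j θ * t) ∂ν :=
  stable_mixture_solves_smoothing_fixed_point_general (mΩ := mΩ) μ (mΘ := mΘ) ν T hTmeas hTnonneg
    hfin W Y hWmeas hYmeas hWnonneg hindep α σ β hα hσ hWfix hY φ hφ
end

section
/- Let (S_n)_{n≥0} be a random walk with i.i.d. real increments of positive finite mean, and let σ = inf{n ≥ 0 : S_n > 0} be the first strict ascending ladder epoch. Then E[(S_1^+)²] < ∞ if and only if E[S_σ²] < ∞. -/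
/-!
If `S_σ > 0` then `S_{σ-1} ≤ 0`, so the ladder height is at most `X_{σ-1}⁺`. The increment `X_n`
is independent of the event `{σ > n}`, which is determined by `X_0, …, X_{n-1}`; summing over
`n` gives `E[S_σ²] ≤ E[σ] · E[(X_0⁺)²]`. To see `E[σ] = ∑ P(σ > n) < ∞`, truncate the increments
at a level `c` with `E[min(X_0, c)] > 0`: this can only delay the ladder epoch, and the truncated
walk stopped at its ladder epoch never exceeds `c`, so a Wald-type identity bounds
`E[min(X_0, c)] · ∑ P(σ > n)` by `c`. Conversely `S_σ = X_0` on `{X_0 > 0}`.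
-/

open MeasureTheory ProbabilityTheory Finset Filter Topology
open scoped ENNReal

/-- `0` when the partial sums never become positive (`sInf ∅ = 0`). -/
noncomputable def ladderEpoch (x : ℕ → ℝ) : ℕ := sInf {n | 0 < n ∧ 0 < ∑ i ∈ range n, x i}

/-- The event `{σ > n}` for the walk with increments `x`. -/
def PartialSumsNonpos (x : ℕ → ℝ) (n : ℕ) : Prop := ∀ k ∈ Icc 1 n, ∑ i ∈ range k, x i ≤ 0

namespace PartialSumsNonpos

variable {x y : ℕ → ℝ} {m n : ℕ}

lemma zero (x : ℕ → ℝ) : PartialSumsNonpos x 0 := by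
  simp [PartialSumsNonpos]

lemma anti (h : PartialSumsNonpos x n) (hmn : m ≤ n) : PartialSumsNonpos x m :=
  fun k hk => h k (Icc_subset_Icc_right hmn hk)

lemma of_le (h : PartialSumsNonpos x n) (hyx : ∀ i, y i ≤ x i) : PartialSumsNonpos y n :=
  fun k hk => (sum_le_sum fun i _ => hyx i).trans (h k hk)

lemma sum_range_nonpos (h : PartialSumsNonpos x n) : ∑ i ∈ range n, x i ≤ 0 := by
  rcases Nat.eq_zero_or_pos n with rfl | hn
  · simp
  · exact h n (mem_Icc.2 ⟨hn, le_rfl⟩)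

end PartialSumsNonpos

section LadderEpoch

variable {x : ℕ → ℝ}

lemma ladderEpoch_eq_zero_iff : ladderEpoch x = 0 ↔ ∀ n, PartialSumsNonpos x n := by
  simp only [ladderEpoch, Nat.sInf_eq_zero, Set.mem_ofPred_eq, lt_irrefl, false_and, false_or,
    Set.eq_empty_iff_forall_notMem, not_and, not_lt]
  exact ⟨fun h n k hk => h k (mem_Icc.1 hk).1, fun h k hk => h k k (mem_Icc.2 ⟨hk, le_rfl⟩)⟩

lemma ladderEpoch_eq_succ_iff {n : ℕ} :
    ladderEpoch x = n + 1 ↔ PartialSumsNonpos x n ∧ 0 < ∑ i ∈ range (n + 1), x i := by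
  set s := {n | 0 < n ∧ 0 < ∑ i ∈ range n, x i}
  have hleast : IsLeast s (n + 1) ↔ PartialSumsNonpos x n ∧ 0 < ∑ i ∈ range (n + 1), x i := by
    refine ⟨fun ⟨hmem, hlow⟩ => ⟨fun k hk => ?_, hmem.2⟩,
      fun ⟨hn, hpos⟩ => ⟨⟨n.succ_pos, hpos⟩, ?_⟩⟩
    · obtain ⟨hk1, hkn⟩ := mem_Icc.1 hk
      exact not_lt.1 fun hpos => absurd (hlow ⟨hk1, hpos⟩) (by omega)
    · rintro k ⟨hk, hpos⟩
      by_contra! hkn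
      exact (hn k (mem_Icc.2 ⟨hk, by omega⟩)).not_gt hpos
  rw [← hleast]
  refine ⟨fun h => ?_, IsLeast.csInf_eq⟩
  exact h ▸ ⟨Nat.sInf_mem (Nat.nonempty_of_sInf_eq_succ h), fun k hk => Nat.sInf_le hk⟩

lemma ladderEpoch_eq_one (hx : 0 < x 0) : ladderEpoch x = 1 :=
  ladderEpoch_eq_succ_iff.2 ⟨.zero x, by simpa using hx⟩

lemma max_sq_le_sq_sum_range_ladderEpoch (x : ℕ → ℝ) :
    max (x 0) 0 ^ 2 ≤ (∑ i ∈ range (ladderEpoch x), x i) ^ 2 := by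
  rcases lt_or_ge 0 (x 0) with hx | hx
  · simp [ladderEpoch_eq_one hx, hx.le]
  · simpa [max_eq_right hx] using sq_nonneg _

lemma ofReal_sq_sum_range_ladderEpoch_le (x : ℕ → ℝ) :
    ENNReal.ofReal ((∑ i ∈ range (ladderEpoch x), x i) ^ 2) ≤
      ∑' n, {n | PartialSumsNonpos x n}.indicator
        (fun n => ENNReal.ofReal (max (x n) 0 ^ 2)) n := by
  rcases h : ladderEpoch x with _ | n
  · simp
  · obtain ⟨hn, hpos⟩ := ladderEpoch_eq_succ_iff.1 h
    refine le_trans ?_ (ENNReal.le_tsum n)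
    rw [Set.indicator_of_mem hn]
    gcongr
    rw [sum_range_succ] at hpos ⊢
    linarith [hn.sum_range_nonpos, le_max_left (x n) 0]

/-- The sum is the truncated walk stopped at its ladder epoch: nonpositive before it, and at most
`c` at it since the last step is at most `c`. -/
lemma sum_indicator_partialSumsNonpos_le {c : ℝ} (hc : 0 ≤ c) (hx : ∀ i, x i ≤ c) (N : ℕ) :
    ∑ n ∈ range N, {n | PartialSumsNonpos x n}.indicator x n ≤ c := by
  induction N with
  | zero => simpa using hc
  | succ N ih =>
    rw [sum_range_succ]
    by_cases hN : PartialSumsNonpos x N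
    · have hsum : ∑ n ∈ range N, {n | PartialSumsNonpos x n}.indicator x n =
          ∑ n ∈ range N, x n :=
        sum_congr rfl fun n hn => Set.indicator_of_mem (hN.anti (mem_range.1 hn).le) x
      rw [hsum, Set.indicator_of_mem hN]
      linarith [hN.sum_range_nonpos, hx N]
    · rw [Set.indicator_of_notMem hN, add_zero]
      exact ih

end LadderEpoch

lemma tendsto_integral_min_natCast {Ω : Type*} {mΩ : MeasurableSpace Ω} {μ : Measure Ω}
    {f : Ω → ℝ} (hf : Integrable f μ) :
    Tendsto (fun N : ℕ => ∫ ω, min (f ω) N ∂μ) atTop (𝓝 (∫ ω, f ω ∂μ)) := by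
  refine tendsto_integral_of_dominated_convergence (fun ω => |f ω|)
    (fun N => hf.aestronglyMeasurable.inf aestronglyMeasurable_const) hf.abs
    (fun N => ae_of_all _ fun ω => ?_) (ae_of_all _ fun ω => ?_)
  · rw [Real.norm_eq_abs, abs_le]
    exact ⟨le_min (neg_abs_le _) ((neg_nonpos.2 (abs_nonneg _)).trans N.cast_nonneg),
      (min_le_left _ _).trans (le_abs_self _)⟩
  · refine tendsto_const_nhds.congr' ?_
    filter_upwards [eventually_ge_atTop ⌈f ω⌉₊] with N hN
    exact (min_eq_left ((Nat.le_ceil _).trans (Nat.cast_le.2 hN))).symm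

namespace ProbabilityTheory

variable {Ω β : Type*} {m mΩ : MeasurableSpace Ω} [mβ : MeasurableSpace β] {μ : Measure Ω}

lemma Indep.setLIntegral_eq_mul {X : Ω → β} {A : Set Ω} {f : β → ℝ≥0∞}
    (hm : m ≤ mΩ) (hind : Indep m (mβ.comap X) μ) (hX : Measurable X) (hA : MeasurableSet[m] A)
    (hf : Measurable f) : ∫⁻ ω in A, f (X ω) ∂μ = μ A * ∫⁻ ω, f (X ω) ∂μ := by
  have hA1 : Measurable[m] (A.indicator 1 : Ω → ℝ≥0∞) := measurable_const.indicator hA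
  rw [← lintegral_indicator (hm A hA), ← lintegral_indicator_one (hm A hA),
    ← lintegral_mul_eq_lintegral_mul_lintegral_of_independent_measurableSpace hm hX.comap_le hind
      (g := fun ω => f (X ω)) hA1 (hf.comp (comap_measurable X))]
  congr with ω
  by_cases hω : ω ∈ A <;> simp [hω]

lemma iIndepFun.indep_iSup_comap_Iio {X : ℕ → Ω → β} (hX : ∀ i, Measurable (X i))
    (hind : iIndepFun X μ) (n : ℕ) :
    Indep (⨆ i ∈ Set.Iio n, mβ.comap (X i)) (mβ.comap (X n)) μ := by
  simpa using indep_iSup_of_disjoint (fun i => (hX i).comap_le)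
    ((iIndepFun_iff_iIndep _ _ _).1 hind) (S := Set.Iio n) (T := {n}) (by simp)

end ProbabilityTheory

section RandomWalk

variable {Ω : Type*} {mΩ : MeasurableSpace Ω} {μ : Measure Ω} {X : ℕ → Ω → ℝ}

lemma measurableSet_partialSumsNonpos {m : MeasurableSpace Ω} {n : ℕ}
    (hX : ∀ i < n, Measurable[m] (X i)) :
    MeasurableSet[m] {ω | PartialSumsNonpos (X · ω) n} := by
  have hset : {ω | PartialSumsNonpos (X · ω) n} =
      ⋂ k ∈ Icc 1 n, {ω | ∑ i ∈ range k, X i ω ≤ 0} := by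
    ext ω
    simp [PartialSumsNonpos]
  rw [hset]
  refine Finset.measurableSet_biInter _ fun k hk => measurableSet_le ?_ measurable_const
  exact Finset.measurable_fun_sum _ fun i hi =>
    hX i ((mem_range.1 hi).trans_le (mem_Icc.1 hk).2)

lemma measurable_ladderEpoch (hX : ∀ i, Measurable (X i)) :
    Measurable fun ω => ladderEpoch (X · ω) := by
  refine measurable_to_countable' fun n => ?_
  rcases n with _ | n
  · simp only [Set.preimage, Set.mem_singleton_iff, ladderEpoch_eq_zero_iff, Set.ofPred_forall]
    exact MeasurableSet.iInter fun n => measurableSet_partialSumsNonpos fun i _ => hX i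
  · simp only [Set.preimage, Set.mem_singleton_iff, ladderEpoch_eq_succ_iff, Set.ofPred_and]
    exact (measurableSet_partialSumsNonpos fun i _ => hX i).inter
      (measurableSet_lt measurable_const (Finset.measurable_fun_sum _ fun i _ => hX i))

lemma measurable_sum_range_ladderEpoch (hX : ∀ i, Measurable (X i)) :
    Measurable fun ω => ∑ i ∈ range (ladderEpoch (X · ω)), X i ω :=
  (measurable_from_prod_countable_left (f := fun p : Ω × ℕ => ∑ i ∈ range p.2, X i p.1)
    fun n => Finset.measurable_fun_sum (range n) fun i _ => hX i).comp
    (measurable_id.prodMk (measurable_ladderEpoch hX))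

lemma measurableSet_iSup_comap_partialSumsNonpos (n : ℕ) :
    MeasurableSet[⨆ i ∈ Set.Iio n, MeasurableSpace.comap (X i) inferInstance]
      {ω | PartialSumsNonpos (X · ω) n} :=
  measurableSet_partialSumsNonpos fun i hi => Measurable.of_comap_le
    (le_iSup₂ (f := fun j (_ : j ∈ Set.Iio n) => MeasurableSpace.comap (X j) _) i hi)

lemma setIntegral_partialSumsNonpos (hX : ∀ i, Measurable (X i)) (hind : iIndepFun X μ)
    (n : ℕ) :
    ∫ ω in {ω | PartialSumsNonpos (X · ω) n}, X n ω ∂μ =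
      μ.real {ω | PartialSumsNonpos (X · ω) n} * ∫ ω, X n ω ∂μ :=
  (hind.indep_iSup_comap_Iio hX n).setIntegral_eq_mul (f := id)
    (iSup₂_le fun i _ => (hX i).comap_le) (hX n).aemeasurable
    (measurableSet_iSup_comap_partialSumsNonpos n)
    aestronglyMeasurable_id

lemma setLIntegral_partialSumsNonpos (hX : ∀ i, Measurable (X i)) (hind : iIndepFun X μ)
    {f : ℝ → ℝ≥0∞} (hf : Measurable f) (n : ℕ) :
    ∫⁻ ω in {ω | PartialSumsNonpos (X · ω) n}, f (X n ω) ∂μ =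
      μ {ω | PartialSumsNonpos (X · ω) n} * ∫⁻ ω, f (X n ω) ∂μ :=
  (hind.indep_iSup_comap_Iio hX n).setLIntegral_eq_mul
    (iSup₂_le fun i _ => (hX i).comap_le) (hX n)
    (measurableSet_iSup_comap_partialSumsNonpos n) hf

lemma integral_mul_sum_measureReal_partialSumsNonpos_le [IsProbabilityMeasure μ]
    (hX : ∀ i, Measurable (X i)) (hind : iIndepFun X μ)
    (hident : ∀ i, IdentDistrib (X i) (X 0) μ μ)
    (hint : Integrable (X 0) μ) {c : ℝ} (hc : 0 ≤ c) (hXc : ∀ i ω, X i ω ≤ c) (N : ℕ) :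
    (∫ ω, X 0 ω ∂μ) * ∑ n ∈ range N, μ.real {ω | PartialSumsNonpos (X · ω) n} ≤ c := by
  have hB n := measurableSet_partialSumsNonpos (n := n) fun i _ => hX i
  have hint' n : Integrable ({ω | PartialSumsNonpos (X · ω) n}.indicator (X n)) μ :=
    ((hident n).integrable_iff.2 hint).indicator (hB n)
  calc (∫ ω, X 0 ω ∂μ) * ∑ n ∈ range N, μ.real {ω | PartialSumsNonpos (X · ω) n}
      = ∑ n ∈ range N, ∫ ω in {ω | PartialSumsNonpos (X · ω) n}, X n ω ∂μ := by
        rw [mul_sum]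
        refine sum_congr rfl fun n _ => ?_
        rw [setIntegral_partialSumsNonpos hX hind, (hident n).integral_eq, mul_comm]
    _ = ∫ ω, ∑ n ∈ range N, {ω | PartialSumsNonpos (X · ω) n}.indicator (X n) ω ∂μ := by
        rw [integral_finsetSum _ fun n _ => hint' n]
        exact sum_congr rfl fun n _ => (integral_indicator (hB n)).symm
    _ ≤ ∫ _, c ∂μ := integral_mono (integrable_finsetSum _ fun n _ => hint' n)
        (integrable_const c) fun ω => sum_indicator_partialSumsNonpos_le hc (hXc · ω) N
    _ = c := by simp

lemma tsum_measure_partialSumsNonpos_lt_top [IsProbabilityMeasure μ] (hX : ∀ i, Measurable (X i))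
    (hind : iIndepFun X μ) (hident : ∀ i, IdentDistrib (X i) (X 0) μ μ)
    (hint : Integrable (X 0) μ) (hmean : 0 < ∫ ω, X 0 ω ∂μ) :
    ∑' n, μ {ω | PartialSumsNonpos (X · ω) n} < ∞ := by
  obtain ⟨N, hN⟩ := ((tendsto_order.1 (tendsto_integral_min_natCast hint)).1 0 hmean).exists
  set c : ℝ := (N : ℝ)
  set Y : ℕ → Ω → ℝ := fun i ω => min (X i ω) c
  have hmin : Measurable fun x : ℝ => min x c := measurable_id.min measurable_const
  have hY i : Measurable (Y i) := hmin.comp (hX i)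
  have hindY : iIndepFun Y μ := hind.comp (fun _ x => min x c) fun _ => hmin
  have hidentY i : IdentDistrib (Y i) (Y 0) μ μ := (hident i).comp hmin
  have hintY : Integrable (Y 0) μ := hint.inf (integrable_const c)
  refine (ENNReal.tsum_le_of_sum_range_le (c := ENNReal.ofReal (c / ∫ ω, Y 0 ω ∂μ))
    fun n => ?_).trans_lt ENNReal.ofReal_lt_top
  calc ∑ k ∈ range n, μ {ω | PartialSumsNonpos (X · ω) k}
      ≤ ∑ k ∈ range n, μ {ω | PartialSumsNonpos (Y · ω) k} :=
        sum_le_sum fun k _ => measure_mono fun ω hω => hω.of_le fun i => min_le_left _ _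
    _ = ENNReal.ofReal (∑ k ∈ range n, μ.real {ω | PartialSumsNonpos (Y · ω) k}) := by
        rw [ENNReal.ofReal_sum_of_nonneg fun _ _ => measureReal_nonneg]
        exact sum_congr rfl fun k _ => (ofReal_measureReal).symm
    _ ≤ ENNReal.ofReal (c / ∫ ω, Y 0 ω ∂μ) := ENNReal.ofReal_le_ofReal ((le_div_iff₀' hN).2
        (integral_mul_sum_measureReal_partialSumsNonpos_le hY hindY hidentY hintY N.cast_nonneg
          (fun _ _ => min_le_right _ _) n))

lemma lintegral_sq_sum_range_ladderEpoch_le (hX : ∀ i, Measurable (X i))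
    (hind : iIndepFun X μ) (hident : ∀ i, IdentDistrib (X i) (X 0) μ μ) :
    ∫⁻ ω, ENNReal.ofReal ((∑ i ∈ range (ladderEpoch (X · ω)), X i ω) ^ 2) ∂μ ≤
      (∑' n, μ {ω | PartialSumsNonpos (X · ω) n}) *
        ∫⁻ ω, ENNReal.ofReal (max (X 0 ω) 0 ^ 2) ∂μ := by
  have hf : Measurable fun x : ℝ => ENNReal.ofReal (max x 0 ^ 2) := by fun_prop
  have hg n : Measurable fun ω => ENNReal.ofReal (max (X n ω) 0 ^ 2) := hf.comp (hX n)
  have hB n := measurableSet_partialSumsNonpos (n := n) fun i _ => hX i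
  calc ∫⁻ ω, ENNReal.ofReal ((∑ i ∈ range (ladderEpoch (X · ω)), X i ω) ^ 2) ∂μ
      ≤ ∫⁻ ω, ∑' n, {ω | PartialSumsNonpos (X · ω) n}.indicator
          (fun ω => ENNReal.ofReal (max (X n ω) 0 ^ 2)) ω ∂μ :=
        lintegral_mono fun ω => ofReal_sq_sum_range_ladderEpoch_le (X · ω)
    _ = ∑' n, ∫⁻ ω in {ω | PartialSumsNonpos (X · ω) n}, ENNReal.ofReal (max (X n ω) 0 ^ 2) ∂μ := by
        rw [lintegral_tsum fun n => ((hg n).indicator (hB n)).aemeasurable]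
        exact tsum_congr fun n => lintegral_indicator (hB n) _
    _ = ∑' n, μ {ω | PartialSumsNonpos (X · ω) n} *
          ∫⁻ ω, ENNReal.ofReal (max (X 0 ω) 0 ^ 2) ∂μ := tsum_congr fun n => by
        rw [setLIntegral_partialSumsNonpos hX hind hf]
        exact congrArg _ ((hident n).comp hf).lintegral_eq
    _ = _ := ENNReal.tsum_mul_right

end RandomWalk

/-- for a random walk with i.i.d. increments of positive finite mean and first
strict ascending ladder epoch `σ`, `E[(S₁⁺)²] < ∞` iff `E[S_σ²] < ∞`. -/
theorem ladder_height_square_integrable_iff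
    {Ω : Type*} {mΩ : MeasurableSpace Ω} (μ : Measure Ω) [IsProbabilityMeasure μ]
    (X : ℕ → Ω → ℝ) (hXmeas : ∀ i, Measurable (X i))
    (hindep : iIndepFun X μ)
    (hident : ∀ i, IdentDistrib (X i) (X 0) μ μ)
    (hint : Integrable (X 0) μ) (hmean : 0 < ∫ ω, X 0 ω ∂μ)
    (S : ℕ → Ω → ℝ) (hS : ∀ n ω, S n ω = ∑ i ∈ Finset.range n, X i ω)
    (σ : Ω → ℕ) (hσ : ∀ ω, σ ω = sInf {n : ℕ | 0 < n ∧ 0 < S n ω}) :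
    Integrable (fun ω => (max (X 0 ω) 0) ^ 2) μ
      ↔ Integrable (fun ω => (S (σ ω) ω) ^ 2) μ := by
  obtain rfl : S = fun n ω => ∑ i ∈ range n, X i ω := funext fun n => funext (hS n)
  obtain rfl : σ = fun ω => ladderEpoch (X · ω) := funext hσ
  constructor
  · intro h
    refine ⟨((measurable_sum_range_ladderEpoch hXmeas).pow_const 2).aestronglyMeasurable, ?_⟩
    rw [hasFiniteIntegral_iff_ofReal (ae_of_all _ fun ω => sq_nonneg _)]
    exact (lintegral_sq_sum_range_ladderEpoch_le hXmeas hindep hident).trans_lt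
      (ENNReal.mul_lt_top (tsum_measure_partialSumsNonpos_lt_top hXmeas hindep hident hint hmean)
        h.lintegral_lt_top)
  · intro h
    refine h.mono' (by fun_prop) (ae_of_all _ fun ω => ?_)
    rw [Real.norm_eq_abs, abs_of_nonneg (sq_nonneg _)]
    exact max_sq_le_sq_sum_range_ladderEpoch (X · ω)
end

section
/- Let α > 1 and suppose W₁ is an integrable endogenous fixed point with respect to T, i.e. W₁ = g(𝐋) is measurable with respect to the branch weights and W₁ = ∑_{|v|=n} L(v)[W₁]_v a.s. for all n, where ([W₁]_v) are the shifted copies. If ∑_{|v|=n} L(v) → ∞ a.s. on the survival set, then W₁ = 0 almost surely. -/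
open MeasureTheory ProbabilityTheory Filter
open Topology


lemma ae_le_on_of_setIntegral {Ω : Type*} {m mΩ : MeasurableSpace Ω} {μ : Measure Ω}
    (hm : m ≤ mΩ) {A : Set Ω} (hA : MeasurableSet[m] A)
    {f g : Ω → ℝ} (hf : Measurable[m] f) (hg : Measurable[m] g)
    (hfi : Integrable f (μ.restrict A)) (hgi : Integrable g (μ.restrict A))
    (heq : ∀ B : Set Ω, MeasurableSet[m] B → B ⊆ A →
      ∫ ω in B, f ω ∂μ = ∫ ω in B, g ω ∂μ) :
    ∀ᵐ ω ∂μ, ω ∈ A → f ω ≤ g ω := by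
  set B : Set Ω := A ∩ {ω | g ω < f ω} with hBdef
  have hBm : MeasurableSet[m] B := hA.inter (measurableSet_lt hg hf)
  have hBm' : MeasurableSet[mΩ] B := hm _ hBm
  have hBsub : B ⊆ A := Set.inter_subset_left
  have hres : μ.restrict B ≤ μ.restrict A := Measure.restrict_mono hBsub le_rfl
  have hfB : Integrable f (μ.restrict B) := hfi.mono_measure hres
  have hgB : Integrable g (μ.restrict B) := hgi.mono_measure hres
  have h0 : ∫ ω in B, (f ω - g ω) ∂μ = 0 := by
    rw [integral_sub hfB hgB, heq B hBm hBsub, sub_self]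
  have hnn : 0 ≤ B.indicator fun ω => f ω - g ω := fun ω => by
    by_cases hω : ω ∈ B
    · have hlt' : g ω < f ω := hω.2
      simpa [Set.indicator_of_mem hω] using (le_of_lt (sub_pos.2 hlt'))
    · simp [Set.indicator_of_notMem hω]
  have hφi : Integrable (B.indicator fun ω => f ω - g ω) μ :=
    (integrable_indicator_iff hBm').2 (hfB.sub hgB)
  have hφ0 := (integral_eq_zero_iff_of_nonneg hnn hφi).1 (by
    rw [integral_indicator hBm']; exact h0)
  filter_upwards [hφ0] with ω hω hωA
  by_contra hlt
  push_neg at hlt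
  have hωB : ω ∈ B := ⟨hωA, hlt⟩
  rw [Pi.zero_apply, Set.indicator_of_mem hωB] at hω
  exact hlt.ne' (sub_eq_zero.1 hω)

lemma ae_eq_on_of_setIntegral {Ω : Type*} {m mΩ : MeasurableSpace Ω} {μ : Measure Ω}
    (hm : m ≤ mΩ) {A : Set Ω} (hA : MeasurableSet[m] A)
    {f g : Ω → ℝ} (hf : Measurable[m] f) (hg : Measurable[m] g)
    (hfi : Integrable f (μ.restrict A)) (hgi : Integrable g (μ.restrict A))
    (heq : ∀ B : Set Ω, MeasurableSet[m] B → B ⊆ A →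
      ∫ ω in B, f ω ∂μ = ∫ ω in B, g ω ∂μ) :
    ∀ᵐ ω ∂μ, ω ∈ A → f ω = g ω := by
  filter_upwards [ae_le_on_of_setIntegral hm hA hf hg hfi hgi heq,
    ae_le_on_of_setIntegral hm hA hg hf hgi hfi (fun B h1 h2 => (heq B h1 h2).symm)]
    with ω h1 h2 hωA
  exact le_antisymm (h1 hωA) (h2 hωA)


/-- if `α > 1`-regime holds in the sense that `∑_{|v|=n} L(v) → ∞` a.s. on the
survival set, then any integrable endogenous fixed point `W₁` w.r.t. `T` vanishes a.s. -/
theorem integrable_endogenous_fixed_point_trivial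
    {Ω : Type*} {mΩ : MeasurableSpace Ω} (μ : Measure Ω) [IsProbabilityMeasure μ]
    (L : List ℕ → Ω → ℝ) (hLnonneg : ∀ v ω, 0 ≤ L v ω)
    -- a.s. finitely many nonzero weights per generation
    (hfin : ∀ᵐ ω ∂μ, ∀ n : ℕ, {v : List ℕ | v.length = n ∧ L v ω ≠ 0}.Finite)
    -- the filtration generated by the weights of the first `n` generations
    (𝒜 : ℕ → MeasurableSpace Ω) (h𝒜le : ∀ n, 𝒜 n ≤ mΩ) (h𝒜mono : Monotone 𝒜)
    (hLmeas : ∀ (n : ℕ) (v : List ℕ), v.length = n → Measurable[𝒜 n] (L v))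
    -- `W₁` and its shifted copies `[W₁]_v`
    (W₁ : Ω → ℝ) (Wv : List ℕ → Ω → ℝ) (hWroot : Wv [] = W₁)
    (hint : Integrable W₁ μ)
    (hW₁meas : Measurable[⨆ n, 𝒜 n] W₁)
    (hident : ∀ v : List ℕ, IdentDistrib (Wv v) W₁ μ μ)
    -- the copies at generation `n` are i.i.d. and independent of `𝒜 n`
    (hiid : ∀ n : ℕ, iIndepFun
      (fun v : {v : List ℕ // v.length = n} => Wv v.1) μ)
    (hindep : ∀ n : ℕ, Indep (𝒜 n)
      (MeasurableSpace.comap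
        (fun ω => (fun v : {v : List ℕ // v.length = n} => Wv v.1 ω))
        MeasurableSpace.pi) μ)
    -- the endogeny identity `W₁ = ∑_{|v|=n} L(v)·[W₁]_v`
    (hendo : ∀ n : ℕ, ∀ᵐ ω ∂μ,
      W₁ ω = ∑' v : {v : List ℕ // v.length = n}, L v.1 ω * Wv v.1 ω)
    -- survival has positive probability
    (hSurvpos : 0 < μ {ω | ∀ n : ℕ, ∃ v : List ℕ, v.length = n ∧ 0 < L v ω})
    -- `∑_{|v|=n} L(v) → ∞` a.s. on the survival set
    (hSum : ∀ᵐ ω ∂μ, (∀ n : ℕ, ∃ v : List ℕ, v.length = n ∧ 0 < L v ω) →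
      Tendsto (fun n : ℕ => ∑' v : {v : List ℕ // v.length = n}, L v.1 ω)
        atTop atTop) :
    ∀ᵐ ω ∂μ, W₁ ω = 0 := by
  set m := ∫ x, W₁ x ∂μ with hmdef
  -- sigma-finiteness of trimmed measures
  haveI hSF : ∀ n, SigmaFinite (μ.trim (h𝒜le n)) := fun n =>
    (isFiniteMeasure_trim (h𝒜le n)).toSigmaFinite
  -- the Lévy upward convergence
  let ℱ : Filtration ℕ mΩ := ⟨𝒜, h𝒜mono, h𝒜le⟩
  have hconv : ∀ᵐ ω ∂μ, Tendsto (fun n => (μ[W₁ | 𝒜 n]) ω) atTop (𝓝 (W₁ ω)) :=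
    hint.tendsto_ae_condExp (ℱ := ℱ) (hW₁meas.stronglyMeasurable)
  -- key identity: μ[W₁|𝒜 n] = m * ∑_{|v|=n} L v  a.e.
  have hkey : ∀ n : ℕ, ∀ᵐ ω ∂μ,
      (μ[W₁ | 𝒜 n]) ω = m * ∑' v : {v : List ℕ // v.length = n}, L v.1 ω := by
    intro n
    set Vn := {v : List ℕ // v.length = n} with hVn
    have hWvint : ∀ v : Vn, Integrable (Wv v.1) μ := fun v => (hident v.1).integrable_iff.2 hint
    have hWvmean : ∀ v : Vn, ∫ x, Wv v.1 x ∂μ = m := fun v => (hident v.1).integral_eq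
    set A : Finset Vn → ℕ → Set Ω := fun F k =>
      {ω | ∀ v : Vn, (v ∉ F → L v.1 ω = 0) ∧ (v ∈ F → L v.1 ω ≤ (k : ℝ))} with hAdef
    have hAmeas : ∀ F k, MeasurableSet[𝒜 n] (A F k) := by
      intro F k
      have hA1 : A F k = ⋂ v : Vn,
          ({ω | v ∉ F → L v.1 ω = 0} ∩ {ω | v ∈ F → L v.1 ω ≤ (k : ℝ)}) := by
        ext ω; simp [hAdef, Set.mem_iInter, forall_and]
      rw [hA1]
      refine MeasurableSet.iInter fun v => MeasurableSet.inter ?_ ?_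
      · by_cases hv : v ∈ F
        · have : {ω | v ∉ F → L v.1 ω = 0} = Set.univ := by
            ext ω; simp [hv]
          rw [this]; exact MeasurableSet.univ
        · have : {ω | v ∉ F → L v.1 ω = 0} = (L v.1) ⁻¹' {0} := by
            ext ω; simp [hv]
          rw [this]; exact hLmeas n v.1 v.2 (measurableSet_singleton 0)
      · by_cases hv : v ∈ F
        · have : {ω | v ∈ F → L v.1 ω ≤ (k : ℝ)} = (L v.1) ⁻¹' Set.Iic (k : ℝ) := by
            ext ω; simp [hv]
          rw [this]; exact hLmeas n v.1 v.2 measurableSet_Iic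
        · have : {ω | v ∈ F → L v.1 ω ≤ (k : ℝ)} = Set.univ := by
            ext ω; simp [hv]
          rw [this]; exact MeasurableSet.univ
    -- independence of indicator·L and Wv
    have hIndepF : ∀ (B : Set Ω), MeasurableSet[𝒜 n] B → ∀ v : Vn,
        IndepFun (B.indicator (L v.1)) (Wv v.1) μ := by
      intro B hB v
      rw [IndepFun_iff_Indep]
      refine indep_of_indep_of_le_right (indep_of_indep_of_le_left (hindep n) ?_) ?_
      · exact measurable_iff_comap_le.1 ((hLmeas n v.1 v.2).indicator hB)
      · have hcomp : Wv v.1 = (fun p : Vn → ℝ => p v) ∘ (fun ω => fun u : Vn => Wv u.1 ω) := rfl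
        rw [hcomp, ← MeasurableSpace.comap_comp]
        exact MeasurableSpace.comap_mono (measurable_iff_comap_le.1 (measurable_pi_apply v))
    -- integrability of the truncated weights
    have hLint : ∀ (F : Finset Vn) (k : ℕ) (B : Set Ω), MeasurableSet[𝒜 n] B → B ⊆ A F k →
        ∀ v ∈ F, Integrable (B.indicator (L v.1)) μ := by
      intro F k B hB hBsub v hv
      refine Integrable.mono' (integrable_const (k : ℝ))
        (((hLmeas n v.1 v.2).indicator hB).mono (h𝒜le n) le_rfl).aestronglyMeasurable ?_
      refine Filter.Eventually.of_forall fun ω => ?_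
      by_cases hω : ω ∈ B
      · rw [Set.indicator_of_mem hω, Real.norm_eq_abs, abs_of_nonneg (hLnonneg v.1 ω)]
        exact ((hBsub hω) v).2 hv
      · simp [Set.indicator_of_notMem hω]
    -- the set-integral identity
    have hsub : ∀ (F : Finset Vn) (k : ℕ) (B : Set Ω), MeasurableSet[𝒜 n] B → B ⊆ A F k →
        ∫ ω in B, (μ[W₁ | 𝒜 n]) ω ∂μ = ∫ ω in B, (m * ∑ v ∈ F, L v.1 ω) ∂μ := by
      intro F k B hB hBsub
      have hB' : MeasurableSet[mΩ] B := h𝒜le n _ hB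
      have hLBres : ∀ v ∈ F, Integrable (L v.1) (μ.restrict B) := fun v hv =>
        (integrable_indicator_iff hB').1 (hLint F k B hB hBsub v hv)
      have hprodint : ∀ v ∈ F, Integrable (fun ω => L v.1 ω * Wv v.1 ω) (μ.restrict B) := by
        intro v hv
        refine Integrable.bdd_mul (c := (k : ℝ)) ((hWvint v).restrict)
          (((hLmeas n v.1 v.2).mono (h𝒜le n) le_rfl).aestronglyMeasurable) ?_
        filter_upwards [ae_restrict_mem hB'] with ω hω
        rw [Real.norm_eq_abs, abs_of_nonneg (hLnonneg v.1 ω)]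
        exact ((hBsub hω) v).2 hv
      rw [setIntegral_condExp (h𝒜le n) hint hB]
      have e1 : ∫ ω in B, W₁ ω ∂μ = ∫ ω in B, (∑ v ∈ F, L v.1 ω * Wv v.1 ω) ∂μ := by
        refine setIntegral_congr_ae hB' ?_
        filter_upwards [hendo n] with ω hω hωB
        rw [hω]
        exact tsum_eq_sum fun v hv => by rw [((hBsub hωB) v).1 hv, zero_mul]
      have hterm : ∀ v ∈ F, ∫ ω in B, L v.1 ω * Wv v.1 ω ∂μ = (∫ ω in B, L v.1 ω ∂μ) * m := by
        intro v hv
        have h2 : ∫ ω in B, L v.1 ω * Wv v.1 ω ∂μ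
            = ∫ ω, (B.indicator (L v.1) * Wv v.1) ω ∂μ := by
          rw [← integral_indicator hB']
          congr 1
          funext ω
          by_cases hω : ω ∈ B <;> simp [hω]
        rw [h2, (hIndepF B hB v).integral_mul_eq_mul_integral (hLint F k B hB hBsub v hv).aestronglyMeasurable
          (hWvint v).aestronglyMeasurable, integral_indicator hB', hWvmean v]
      calc ∫ ω in B, W₁ ω ∂μ = ∫ ω in B, (∑ v ∈ F, L v.1 ω * Wv v.1 ω) ∂μ := e1
        _ = ∑ v ∈ F, ∫ ω in B, L v.1 ω * Wv v.1 ω ∂μ := integral_finset_sum F hprodint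
        _ = ∑ v ∈ F, (∫ ω in B, L v.1 ω ∂μ) * m := Finset.sum_congr rfl hterm
        _ = m * ∑ v ∈ F, ∫ ω in B, L v.1 ω ∂μ := by rw [← Finset.sum_mul, mul_comm]
        _ = m * ∫ ω in B, (∑ v ∈ F, L v.1 ω) ∂μ := by rw [integral_finset_sum F hLBres]
        _ = ∫ ω in B, (m * ∑ v ∈ F, L v.1 ω) ∂μ := (integral_const_mul m _).symm
    -- a.e. equality on each A F k
    have hae : ∀ (F : Finset Vn) (k : ℕ), ∀ᵐ ω ∂μ, ω ∈ A F k →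
        (μ[W₁ | 𝒜 n]) ω = m * ∑ v ∈ F, L v.1 ω := by
      intro F k
      have hgmeas : Measurable[𝒜 n] (fun ω => m * ∑ v ∈ F, L v.1 ω) :=
        (Finset.measurable_sum F fun v _ => hLmeas n v.1 v.2).const_mul m
      have hgint : Integrable (fun ω => m * ∑ v ∈ F, L v.1 ω) (μ.restrict (A F k)) := by
        refine Integrable.mono' (integrable_const (|m| * (F.card * k)))
          ((hgmeas.mono (h𝒜le n) le_rfl).aestronglyMeasurable) ?_
        filter_upwards [ae_restrict_mem (h𝒜le n _ (hAmeas F k))] with ω hω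
        rw [Real.norm_eq_abs, abs_mul]
        refine mul_le_mul_of_nonneg_left ?_ (abs_nonneg m)
        rw [abs_of_nonneg (Finset.sum_nonneg fun v _ => hLnonneg v.1 ω)]
        calc ∑ v ∈ F, L v.1 ω ≤ ∑ _v ∈ F, (k : ℝ) :=
              Finset.sum_le_sum fun v hv => (hω v).2 hv
          _ = F.card * k := by rw [Finset.sum_const, nsmul_eq_mul]
      exact ae_eq_on_of_setIntegral (h𝒜le n) (hAmeas F k)
        stronglyMeasurable_condExp.measurable hgmeas
        (integrable_condExp.restrict) hgint (fun B hB hBsub => hsub F k B hB hBsub)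
    -- a.e. covering
    have hcov : ∀ᵐ ω ∂μ, ∃ F : Finset Vn, ∃ k : ℕ, ω ∈ A F k := by
      filter_upwards [hfin] with ω hω
      have hS : {v : Vn | L v.1 ω ≠ 0}.Finite := by
        have hpre : {v : Vn | L v.1 ω ≠ 0}
            = Subtype.val ⁻¹' {v : List ℕ | v.length = n ∧ L v ω ≠ 0} := by
          ext v; exact ⟨fun h => ⟨v.2, h⟩, fun h => h.2⟩
        rw [hpre]
        exact Set.Finite.preimage Subtype.val_injective.injOn (hω n)
      obtain ⟨k, hk⟩ := exists_nat_ge (∑ v ∈ hS.toFinset, L v.1 ω)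
      refine ⟨hS.toFinset, k, fun v => ⟨fun hv => ?_, fun hv => ?_⟩⟩
      · by_contra h0
        exact hv (hS.mem_toFinset.2 h0)
      · calc L v.1 ω ≤ ∑ u ∈ hS.toFinset, L u.1 ω :=
              Finset.single_le_sum (fun u _ => hLnonneg u.1 ω) hv
          _ ≤ k := hk
    have hall : ∀ᵐ ω ∂μ, ∀ F : Finset Vn, ∀ k : ℕ, ω ∈ A F k →
        (μ[W₁ | 𝒜 n]) ω = m * ∑ v ∈ F, L v.1 ω :=
      ae_all_iff.2 fun F => ae_all_iff.2 fun k => hae F k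
    filter_upwards [hall, hcov] with ω h1 h2
    obtain ⟨F, k, hmem⟩ := h2
    rw [h1 F k hmem]
    congr 1
    exact (tsum_eq_sum fun v hv => (hmem v).1 hv).symm
  -- the mean vanishes
  have hm0 : m = 0 := by
    by_contra hne
    have hW : ∀ᵐ ω ∂μ, (∀ n, (μ[W₁ | 𝒜 n]) ω
          = m * ∑' v : {v : List ℕ // v.length = n}, L v.1 ω)
        ∧ Tendsto (fun n => (μ[W₁ | 𝒜 n]) ω) atTop (𝓝 (W₁ ω))
        ∧ ((∀ n : ℕ, ∃ v : List ℕ, v.length = n ∧ 0 < L v ω) →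
          Tendsto (fun n : ℕ => ∑' v : {v : List ℕ // v.length = n}, L v.1 ω) atTop atTop) :=
      ((ae_all_iff.2 hkey).and (hconv.and hSum))
    have hwit : ∃ ω, ω ∈ {ω | ∀ n : ℕ, ∃ v : List ℕ, v.length = n ∧ 0 < L v ω}
        ∧ ((∀ n, (μ[W₁ | 𝒜 n]) ω
          = m * ∑' v : {v : List ℕ // v.length = n}, L v.1 ω)
        ∧ Tendsto (fun n => (μ[W₁ | 𝒜 n]) ω) atTop (𝓝 (W₁ ω))
        ∧ ((∀ n : ℕ, ∃ v : List ℕ, v.length = n ∧ 0 < L v ω) →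
          Tendsto (fun n : ℕ => ∑' v : {v : List ℕ // v.length = n}, L v.1 ω) atTop atTop)) := by
      by_contra hno
      refine hSurvpos.ne' (measure_mono_null (fun ω hω => ?_) (ae_iff.1 hW))
      exact fun hP => hno ⟨ω, hω, hP⟩
    obtain ⟨ω₀, hωSurv, h1, h2, h3⟩ := hwit
    have hStop := h3 hωSurv
    have ht : Tendsto (fun n => m * ∑' v : {v : List ℕ // v.length = n}, L v.1 ω₀)
        atTop (𝓝 (W₁ ω₀)) := h2.congr fun n => h1 n
    rcases lt_trichotomy m 0 with hmlt | hmeq | hmgt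
    · exact not_tendsto_nhds_of_tendsto_atBot (hStop.const_mul_atTop_of_neg hmlt) _ ht
    · exact hne hmeq
    · exact not_tendsto_nhds_of_tendsto_atTop (hStop.const_mul_atTop hmgt) _ ht
  -- conclusion
  have hz : ∀ᵐ ω ∂μ, ∀ n, (μ[W₁ | 𝒜 n]) ω = 0 := by
    refine ae_all_iff.2 fun n => (hkey n).mono fun ω h => ?_
    rw [h, hm0, zero_mul]
  filter_upwards [hconv, hz] with ω h1 h2
  have h0 : Tendsto (fun _ : ℕ => (0:ℝ)) atTop (𝓝 (W₁ ω)) := h1.congr h2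
  exact tendsto_nhds_unique h0 tendsto_const_nhds
end

section
/- The set of solutions to the Quicksort equation X ≜ UX₁ + (1−U)X₂ + g(U) is closed under convolution with Cauchy distributions: if X solves the equation and Z ~ Cauchy(μ,σ) is independent of X, then X + Z also solves the equation. -/
open MeasureTheory ProbabilityTheory Complex

/-- the set of solutions to the Quicksort equation is closed under convolution
with Cauchy distributions: if the law of `X` solves the equation and `Z ~ Cauchy(μ₀,σ)` is
independent of `X`, then the law of `X + Z` also solves the equation (stated via
characteristic functions). -/
theorem quicksort_solutions_closed_under_cauchy_convolution
    {Ω : Type*} {mΩ : MeasurableSpace Ω} (μ : Measure Ω) [IsProbabilityMeasure μ]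
    (U : Ω → ℝ) (hUmeas : Measurable U)
    (hUunif : Measure.map U μ = MeasureTheory.volume.restrict (Set.Ioo (0:ℝ) 1))
    (g : ℝ → ℝ)
    (hg : ∀ u : ℝ, g u = 2 * u * Real.log u + 2 * (1 - u) * Real.log (1 - u) + 1)
    (X Z : Ω → ℝ) (hXmeas : Measurable X) (hZmeas : Measurable Z)
    (hindep : IndepFun X Z μ)
    (μ₀ σ : ℝ) (hσ : 0 ≤ σ)
    -- `Z ~ Cauchy(μ₀, σ)`
    (hZ : ∀ t : ℝ, (∫ ω, Complex.exp (Complex.I * t * Z ω) ∂μ)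
      = Complex.exp (Complex.I * μ₀ * t - σ * |t|))
    -- the law of `X` solves the Quicksort equation (characteristic-function form)
    (hXsolve : ∀ t : ℝ,
      (∫ ω, Complex.exp (Complex.I * t * X ω) ∂μ)
        = ∫ ω, Complex.exp (Complex.I * t * g (U ω))
            * (∫ ω', Complex.exp (Complex.I * (U ω * t) * X ω') ∂μ)
            * (∫ ω', Complex.exp (Complex.I * ((1 - U ω) * t) * X ω') ∂μ) ∂μ) :
    -- then the law of `X + Z` solves the Quicksort equation as well
    ∀ t : ℝ,
      (∫ ω, Complex.exp (Complex.I * t * (X ω + Z ω)) ∂μ)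
        = ∫ ω, Complex.exp (Complex.I * t * g (U ω))
            * (∫ ω', Complex.exp (Complex.I * (U ω * t) * (X ω' + Z ω')) ∂μ)
            * (∫ ω', Complex.exp (Complex.I * ((1 - U ω) * t) * (X ω' + Z ω')) ∂μ) ∂μ := by
  intro t
  set φX : ℝ → ℂ := fun s => ∫ ω, Complex.exp (Complex.I * s * X ω) ∂μ with hφX
  -- characteristic function of the sum factors
  have hsum : ∀ s : ℝ, (∫ ω, Complex.exp (Complex.I * s * (X ω + Z ω)) ∂μ)
      = φX s * Complex.exp (Complex.I * μ₀ * s - σ * |s|) := by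
    intro s
    have hmap : Measure.map (fun ω => (X ω, Z ω)) μ
        = (Measure.map X μ).prod (Measure.map Z μ) :=
      (indepFun_iff_map_prod_eq_prod_map_map hXmeas.aemeasurable hZmeas.aemeasurable).mp hindep
    have hcX : Continuous fun x : ℝ => Complex.exp (Complex.I * s * x) := by
      fun_prop
    have hcZ : Continuous fun x : ℝ => Complex.exp (Complex.I * s * x) := hcX
    have h1 : (∫ ω, Complex.exp (Complex.I * s * (X ω + Z ω)) ∂μ)
        = ∫ p : ℝ × ℝ, Complex.exp (Complex.I * s * p.1) * Complex.exp (Complex.I * s * p.2)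
            ∂((Measure.map X μ).prod (Measure.map Z μ)) := by
      rw [← hmap, integral_map (hXmeas.prodMk hZmeas).aemeasurable]
      · congr 1
        funext ω
        rw [← Complex.exp_add]
        congr 1
        push_cast
        ring
      · exact ((hcX.comp continuous_fst).mul (hcZ.comp continuous_snd)).aestronglyMeasurable
    rw [h1, integral_prod_mul (f := fun x : ℝ => Complex.exp (Complex.I * s * x))
      (g := fun x : ℝ => Complex.exp (Complex.I * s * x)),
      integral_map hXmeas.aemeasurable hcX.aestronglyMeasurable,
      integral_map hZmeas.aemeasurable hcZ.aestronglyMeasurable, hZ s]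
  -- a.e., U lands in (0,1)
  have hUae : ∀ᵐ ω ∂μ, U ω ∈ Set.Ioo (0:ℝ) 1 := by
    have h1 : μ (U ⁻¹' Set.Ioo (0:ℝ) 1) = 1 := by
      have := Measure.map_apply (μ := μ) hUmeas (measurableSet_Ioo (a := (0:ℝ)) (b := 1))
      rw [hUunif] at this
      rw [← this]
      simp [Measure.restrict_apply, Real.volume_Ioo]
    have h2 : μ (U ⁻¹' Set.Ioo (0:ℝ) 1)ᶜ = 0 := by
      rw [measure_compl (hUmeas measurableSet_Ioo) (measure_ne_top μ _), h1, measure_univ]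
      simp
    exact mem_ae_iff.mpr h2
  -- rewrite both sides using `hsum`
  rw [hsum t]
  have hinner : ∀ ω, (∫ ω', Complex.exp (Complex.I * (U ω * t) * (X ω' + Z ω')) ∂μ)
      = φX (U ω * t) * Complex.exp (Complex.I * μ₀ * (U ω * t) - σ * |U ω * t|) := fun ω => by
    simpa [Complex.ofReal_mul] using hsum (U ω * t)
  have hinner' : ∀ ω, (∫ ω', Complex.exp (Complex.I * ((1 - U ω) * t) * (X ω' + Z ω')) ∂μ)
      = φX ((1 - U ω) * t)
        * Complex.exp (Complex.I * μ₀ * ((1 - U ω) * t) - σ * |(1 - U ω) * t|) := fun ω => by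
    simpa [Complex.ofReal_mul, Complex.ofReal_sub, Complex.ofReal_one] using hsum ((1 - U ω) * t)
  simp only [hinner, hinner']
  -- simplify the integrand a.e. using `U ω ∈ (0,1)`
  have hcongr : ∀ᵐ ω ∂μ,
      Complex.exp (Complex.I * t * g (U ω))
        * (φX (U ω * t) * Complex.exp (Complex.I * μ₀ * (U ω * t) - σ * |U ω * t|))
        * (φX ((1 - U ω) * t)
            * Complex.exp (Complex.I * μ₀ * ((1 - U ω) * t) - σ * |(1 - U ω) * t|))
      = (Complex.exp (Complex.I * t * g (U ω)) * φX (U ω * t) * φX ((1 - U ω) * t))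
          * Complex.exp (Complex.I * μ₀ * t - σ * |t|) := by
    filter_upwards [hUae] with ω hω
    have h1 : |U ω * t| = U ω * |t| := by
      rw [abs_mul, abs_of_pos hω.1]
    have h2 : |(1 - U ω) * t| = (1 - U ω) * |t| := by
      rw [abs_mul, abs_of_pos (by linarith [hω.2])]
    have hprod : Complex.exp (Complex.I * μ₀ * (U ω * t) - σ * |U ω * t|)
        * Complex.exp (Complex.I * μ₀ * ((1 - U ω) * t) - σ * |(1 - U ω) * t|)
        = Complex.exp (Complex.I * μ₀ * t - σ * |t|) := by
      rw [← Complex.exp_add]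
      congr 1
      rw [h1, h2]
      push_cast
      ring
    calc Complex.exp (Complex.I * t * g (U ω))
        * (φX (U ω * t) * Complex.exp (Complex.I * μ₀ * (U ω * t) - σ * |U ω * t|))
        * (φX ((1 - U ω) * t)
            * Complex.exp (Complex.I * μ₀ * ((1 - U ω) * t) - σ * |(1 - U ω) * t|))
        = (Complex.exp (Complex.I * t * g (U ω)) * φX (U ω * t) * φX ((1 - U ω) * t))
          * (Complex.exp (Complex.I * μ₀ * (U ω * t) - σ * |U ω * t|)
            * Complex.exp (Complex.I * μ₀ * ((1 - U ω) * t) - σ * |(1 - U ω) * t|)) := by ring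
      _ = _ := by rw [hprod]
  rw [integral_congr_ae hcongr, integral_mul_const]
  congr 1
  simp only [hφX]
  rw [hXsolve t]
  refine integral_congr_ae (Filter.Eventually.of_forall fun ω => ?_)
  simp [Complex.ofReal_mul, Complex.ofReal_sub, Complex.ofReal_one]
end
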